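/- arXiv:2005.02329 — 10 statements merged into one kernel-verified Lean document; each statement's English description precedes it below -/
import Mathlib

section
/- Let r be a degree-feasible multiplicity function that minimizes cost among all degree-feasible multiplicity functions, and suppose at least one degree-feasible multiplicity function contains a member of F. Then there exists a multiplicity function c′ that is degree-feasible, contains a member of F, minimizes cost among all degree-feasible multiplicity functions containing a member of F, and satisfies |r(u,v) − c′(u,v)| ≤ s(F) for every u, v ∈ V. -/
variable {V : Type*} [Fintype V] [DecidableEq V]

/-- The cost of a multiplicity function `m` w.r.t. a cost function `d`. -/
def mCost (d m : V × V → ℕ) : ℕ := ∑ p : V × V, d p * m p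

/-- `m` is degree-feasible for demands `din`, `dout` and allowed edge set `A`. -/
def DegFeasible (A : Set (V × V)) (din dout : V → ℕ) (m : V × V → ℕ) : Prop :=
  (∀ p : V × V, p ∉ A → m p = 0) ∧
  (∀ v : V, ∑ w : V, m (v, w) = dout v) ∧
  (∀ v : V, ∑ w : V, m (w, v) = din v)

/-- `m` contains a member of the family `F`. -/
def ContainsMember (F : Finset (Finset (V × V))) (m : V × V → ℕ) : Prop :=
  ∃ B ∈ F, ∀ e ∈ B, 1 ≤ m e


open Finset

set_option linter.unusedSectionVars false

private lemma shift_sum (f : ℕ → ℤ) {n m : ℕ} (h : n ≤ m) :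
    ∑ t ∈ Finset.Ico n m, f (t + 1) = ∑ t ∈ Finset.Ico n m, f t + f m - f n := by
  induction m, h using Nat.le_induction with
  | base => simp
  | succ m h ih =>
    rw [Finset.sum_Ico_succ_top (by omega), Finset.sum_Ico_succ_top (by omega), ih]
    ring

private lemma exists_cycle (D : V × V → ℤ)
    (hrow : ∀ u, ∑ v, D (u, v) = 0) (hcol : ∀ v, ∑ u, D (u, v) = 0)
    (hne : ∃ e, D e ≠ 0) :
    ∃ γ : V × V → ℤ,
      (∀ u, ∑ v, γ (u, v) = 0) ∧ (∀ v, ∑ u, γ (u, v) = 0) ∧ (∃ e, γ e ≠ 0) ∧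
      (∀ e, γ e = 0 ∨ (γ e = 1 ∧ 1 ≤ D e) ∨ (γ e = -1 ∧ D e ≤ -1)) := by
  classical
  obtain ⟨e₀, he₀⟩ := hne
  -- from a negative entry in a row, get a positive entry in that row
  have posrow : ∀ {u v}, D (u, v) < 0 → ∃ v', 0 < D (u, v') := by
    intro u v h
    by_contra hc
    push_neg at hc
    have h0 : D (u, v) = 0 :=
      (Finset.sum_eq_zero_iff_of_nonpos (fun v' _ => hc v')).1 (hrow u) v (mem_univ v)
    omega
  have negcol : ∀ {u v}, 0 < D (u, v) → ∃ u', D (u', v) < 0 := by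
    intro u v h
    by_contra hc
    push_neg at hc
    have h0 : D (u, v) = 0 :=
      (Finset.sum_eq_zero_iff_of_nonneg (fun u' _ => hc u')).1 (hcol v) u (mem_univ u)
    omega
  set g : V ⊕ V → V ⊕ V := fun w =>
    match w with
    | Sum.inl u => Sum.inr (if h : ∃ v, 0 < D (u, v) then h.choose else e₀.2)
    | Sum.inr v => Sum.inl (if h : ∃ u, D (u, v) < 0 then h.choose else e₀.1)
    with hg
  set P : V ⊕ V → Prop := fun w =>
    match w with
    | Sum.inl u => ∃ v, 0 < D (u, v)
    | Sum.inr v => ∃ u, D (u, v) < 0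
    with hP
  have hgl : ∀ u, (∃ v, 0 < D (u, v)) → ∃ v, g (Sum.inl u) = Sum.inr v ∧ 0 < D (u, v) := by
    intro u h
    refine ⟨h.choose, ?_, h.choose_spec⟩
    simp only [hg, dif_pos h]
  have hgr : ∀ v, (∃ u, D (u, v) < 0) → ∃ u, g (Sum.inr v) = Sum.inl u ∧ D (u, v) < 0 := by
    intro v h
    refine ⟨h.choose, ?_, h.choose_spec⟩
    simp only [hg, dif_pos h]
  have hstep : ∀ w, P w → P (g w) := by
    intro w hw
    cases w with
    | inl u =>
      obtain ⟨v, hgv, hpos⟩ := hgl u hw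
      rw [hgv]
      exact negcol hpos
    | inr v =>
      obtain ⟨u, hgu, hneg⟩ := hgr v hw
      rw [hgu]
      exact posrow hneg
  -- starting point
  obtain ⟨w₀, hPw₀⟩ : ∃ w₀, P w₀ := by
    rcases lt_or_gt_of_ne he₀ with h | h
    · exact ⟨Sum.inr e₀.2, ⟨e₀.1, h⟩⟩
    · exact ⟨Sum.inl e₀.1, ⟨e₀.2, h⟩⟩
  set w : ℕ → V ⊕ V := fun t => g^[t] w₀ with hwdef
  have hwsucc : ∀ t, w (t + 1) = g (w t) := by
    intro t; simp [hwdef, Function.iterate_succ_apply']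
  have hPt : ∀ t, P (w t) := by
    intro t
    induction t with
    | zero => exact hPw₀
    | succ t ih => rw [hwsucc]; exact hstep _ ih
  -- alternation facts
  have hwl : ∀ t u, w t = Sum.inl u → ∃ v, w (t + 1) = Sum.inr v ∧ 0 < D (u, v) := by
    intro t u ht
    obtain ⟨v, hv, hpos⟩ := hgl u (by have := hPt t; rw [ht] at this; exact this)
    exact ⟨v, by rw [hwsucc, ht, hv], hpos⟩
  have hwr : ∀ t v, w t = Sum.inr v → ∃ u, w (t + 1) = Sum.inl u ∧ D (u, v) < 0 := by
    intro t v ht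
    obtain ⟨u, hu, hneg⟩ := hgr v (by have := hPt t; rw [ht] at this; exact this)
    exact ⟨u, by rw [hwsucc, ht, hu], hneg⟩
  -- collision
  have hcoll : ∃ m, ∃ n, n < m ∧ w n = w m := by
    obtain ⟨a, b, hab, heq⟩ := Finite.exists_ne_map_eq_of_infinite w
    rcases Nat.lt_or_ge a b with h | h
    · exact ⟨b, a, h, heq⟩
    · exact ⟨a, b, lt_of_le_of_ne h (Ne.symm hab), heq.symm⟩
  set m := Nat.find hcoll with hm
  obtain ⟨n, hnm, hweq⟩ := Nat.find_spec hcoll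
  have hinj : ∀ s t, s < t → t < m → w s ≠ w t := by
    intro s t hst htm hcontra
    exact Nat.find_min hcoll htm ⟨s, hst, hcontra⟩
  -- the cycle function
  set pl : V × V → ℤ := fun e =>
    ∑ t ∈ Finset.Ico n m, if w t = Sum.inl e.1 ∧ w (t + 1) = Sum.inr e.2 then 1 else 0
    with hpl
  set mi : V × V → ℤ := fun e =>
    ∑ t ∈ Finset.Ico n m, if w t = Sum.inr e.2 ∧ w (t + 1) = Sum.inl e.1 then 1 else 0
    with hmi
  -- single-step characterizations
  have hpl1 : ∀ a b t₀, t₀ ∈ Finset.Ico n m → w t₀ = Sum.inl a → w (t₀ + 1) = Sum.inr b →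
      pl (a, b) = 1 ∧ 0 < D (a, b) := by
    intro a b t₀ ht₀mem h1 h2
    constructor
    · simp only [hpl]
      rw [Finset.sum_eq_single_of_mem t₀ ht₀mem]
      · exact if_pos ⟨h1, h2⟩
      · intro t htmem hne'
        rw [if_neg]
        rintro ⟨g1, g2⟩
        have hww : w t = w t₀ := by rw [g1, h1]
        have htm := (Finset.mem_Ico.1 htmem).2
        have ht₀m := (Finset.mem_Ico.1 ht₀mem).2
        rcases lt_trichotomy t t₀ with h | h | h
        · exact hinj t t₀ h ht₀m hww
        · exact hne' h
        · exact hinj t₀ t h htm hww.symm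
    · obtain ⟨v', hv', hpos⟩ := hwl t₀ a h1
      rw [h2] at hv'
      obtain rfl : b = v' := Sum.inr.inj hv'
      exact hpos
  have hmi1 : ∀ a b t₀, t₀ ∈ Finset.Ico n m → w t₀ = Sum.inr b → w (t₀ + 1) = Sum.inl a →
      mi (a, b) = 1 ∧ D (a, b) < 0 := by
    intro a b t₀ ht₀mem h1 h2
    constructor
    · simp only [hmi]
      rw [Finset.sum_eq_single_of_mem t₀ ht₀mem]
      · exact if_pos ⟨h1, h2⟩
      · intro t htmem hne'
        rw [if_neg]
        rintro ⟨g1, g2⟩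
        have hww : w t = w t₀ := by rw [g1, h1]
        have htm := (Finset.mem_Ico.1 htmem).2
        have ht₀m := (Finset.mem_Ico.1 ht₀mem).2
        rcases lt_trichotomy t t₀ with h | h | h
        · exact hinj t t₀ h ht₀m hww
        · exact hne' h
        · exact hinj t₀ t h htm hww.symm
    · obtain ⟨u', hu', hneg⟩ := hwr t₀ b h1
      rw [h2] at hu'
      obtain rfl : a = u' := Sum.inl.inj hu'
      exact hneg
  have hplcases : ∀ e, pl e = 0 ∨ (pl e = 1 ∧ 0 < D e) := by
    rintro ⟨a, b⟩
    by_cases hx : ∃ t, t ∈ Finset.Ico n m ∧ w t = Sum.inl a ∧ w (t + 1) = Sum.inr b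
    · obtain ⟨t₀, ht₀mem, h1, h2⟩ := hx
      exact Or.inr (hpl1 a b t₀ ht₀mem h1 h2)
    · left
      rw [hpl]
      apply Finset.sum_eq_zero
      intro t htmem
      rw [if_neg]
      exact fun hc => hx ⟨t, htmem, hc⟩
  have hmicases : ∀ e, mi e = 0 ∨ (mi e = 1 ∧ D e < 0) := by
    rintro ⟨a, b⟩
    by_cases hx : ∃ t, t ∈ Finset.Ico n m ∧ w t = Sum.inr b ∧ w (t + 1) = Sum.inl a
    · obtain ⟨t₀, ht₀mem, h1, h2⟩ := hx
      exact Or.inr (hmi1 a b t₀ ht₀mem h1 h2)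
    · left
      rw [hmi]
      apply Finset.sum_eq_zero
      intro t htmem
      rw [if_neg]
      exact fun hc => hx ⟨t, htmem, hc⟩
  -- row and column sums
  have hplrow : ∀ u, ∑ v, pl (u, v) =
      ∑ t ∈ Finset.Ico n m, (if w t = Sum.inl u then (1 : ℤ) else 0) := by
    intro u
    rw [hpl]
    rw [Finset.sum_comm]
    refine Finset.sum_congr rfl fun t _ => ?_
    by_cases ht : w t = Sum.inl u
    · obtain ⟨v', hv', _⟩ := hwl t u ht
      simp [ht, hv']
    · simp [ht]
  have hmirow : ∀ u, ∑ v, mi (u, v) =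
      ∑ t ∈ Finset.Ico n m, (if w (t + 1) = Sum.inl u then (1 : ℤ) else 0) := by
    intro u
    rw [hmi]
    rw [Finset.sum_comm]
    refine Finset.sum_congr rfl fun t _ => ?_
    cases hwt : w t with
    | inl u' =>
      obtain ⟨v', hv', _⟩ := hwl t u' hwt
      simp [hwt, hv']
    | inr v' =>
      obtain ⟨u', hu', _⟩ := hwr t v' hwt
      by_cases hu : u' = u <;> simp [hwt, hu', hu]
  have hplcol : ∀ v, ∑ u, pl (u, v) =
      ∑ t ∈ Finset.Ico n m, (if w (t + 1) = Sum.inr v then (1 : ℤ) else 0) := by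
    intro v
    rw [hpl]
    rw [Finset.sum_comm]
    refine Finset.sum_congr rfl fun t _ => ?_
    cases hwt : w t with
    | inl u' =>
      obtain ⟨v', hv', _⟩ := hwl t u' hwt
      by_cases hv : v' = v <;> simp [hwt, hv', hv]
    | inr v' =>
      obtain ⟨u', hu', _⟩ := hwr t v' hwt
      simp [hwt, hu']
  have hmicol : ∀ v, ∑ u, mi (u, v) =
      ∑ t ∈ Finset.Ico n m, (if w t = Sum.inr v then (1 : ℤ) else 0) := by
    intro v
    rw [hmi]
    rw [Finset.sum_comm]
    refine Finset.sum_congr rfl fun t _ => ?_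
    by_cases ht : w t = Sum.inr v
    · obtain ⟨u', hu', _⟩ := hwr t v ht
      simp [ht, hu']
    · simp [ht]
  have hnlem : n ≤ m := le_of_lt hnm
  refine ⟨fun e => pl e - mi e, ?_, ?_, ?_, ?_⟩
  · intro u
    rw [Finset.sum_sub_distrib]
    rw [hplrow u, hmirow u]
    rw [shift_sum (fun t => if w t = Sum.inl u then (1 : ℤ) else 0) hnlem]
    rw [hweq]
    ring
  · intro v
    rw [Finset.sum_sub_distrib]
    rw [hplcol v, hmicol v]
    rw [shift_sum (fun t => if w t = Sum.inr v then (1 : ℤ) else 0) hnlem]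
    rw [hweq]
    ring
  · have hnmem : n ∈ Finset.Ico n m := Finset.mem_Ico.2 ⟨le_refl n, hnm⟩
    cases hwn : w n with
    | inl u =>
      obtain ⟨v, hv, _⟩ := hwl n u hwn
      obtain ⟨h1, h2⟩ := hpl1 u v n hnmem hwn hv
      refine ⟨(u, v), ?_⟩
      show pl (u, v) - mi (u, v) ≠ 0
      rcases hmicases (u, v) with h | ⟨_, h⟩
      · rw [h1, h]; norm_num
      · omega
    | inr v =>
      obtain ⟨u, hu, _⟩ := hwr n v hwn
      obtain ⟨h1, h2⟩ := hmi1 u v n hnmem hwn hu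
      refine ⟨(u, v), ?_⟩
      show pl (u, v) - mi (u, v) ≠ 0
      rcases hplcases (u, v) with h | ⟨_, h⟩
      · rw [h1, h]; norm_num
      · omega
  · intro e
    beta_reduce
    rcases hplcases e with h1 | ⟨h1, hp⟩ <;> rcases hmicases e with h2 | ⟨h2, hq⟩
    · left; rw [h1, h2]; ring
    · right; right; constructor; · rw [h1, h2]; ring
      · omega
    · right; left; constructor; · rw [h1, h2]; ring
      · omega
    · omega

private lemma exists_decomp :
    ∀ (N : ℕ) (D : V × V → ℤ), (∑ e : V × V, (D e).natAbs) ≤ N →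
    (∀ u, ∑ v, D (u, v) = 0) → (∀ v, ∑ u, D (u, v) = 0) →
    ∃ (k : ℕ) (γ : ℕ → V × V → ℤ),
      (∀ e, ∑ i ∈ Finset.range k, γ i e = D e) ∧
      ∀ i < k, (∀ u, ∑ v, γ i (u, v) = 0) ∧ (∀ v, ∑ u, γ i (u, v) = 0) ∧
        (∃ e, γ i e ≠ 0) ∧
        (∀ e, γ i e = 0 ∨ (γ i e = 1 ∧ 1 ≤ D e) ∨ (γ i e = -1 ∧ D e ≤ -1)) := by
  intro N
  induction N with
  | zero =>
    intro D hN _ _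
    refine ⟨0, fun _ _ => 0, fun e => ?_, fun i hi => absurd hi (by omega)⟩
    have : (D e).natAbs = 0 := by
      have := Finset.sum_eq_zero_iff.1 (Nat.le_zero.1 hN) e (Finset.mem_univ e)
      exact this
    simp [Int.natAbs_eq_zero.1 this]
  | succ N ih =>
    intro D hN hrow hcol
    by_cases hD : ∃ e, D e ≠ 0
    · obtain ⟨γ₀, hγrow, hγcol, hγne, hγconf⟩ := exists_cycle D hrow hcol hD
      set D' : V × V → ℤ := fun e => D e - γ₀ e with hD'
      have hconf' : ∀ e, (D' e).natAbs ≤ (D e).natAbs ∧ (γ₀ e ≠ 0 → (D' e).natAbs < (D e).natAbs) := by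
        intro e
        rcases hγconf e with h | ⟨h1, h2⟩ | ⟨h1, h2⟩ <;> simp only [hD'] <;>
          exact ⟨by omega, fun _ => by omega⟩
      have hN' : (∑ e : V × V, (D' e).natAbs) ≤ N := by
        obtain ⟨e₁, he₁⟩ := hγne
        have hlt : (∑ e : V × V, (D' e).natAbs) < ∑ e : V × V, (D e).natAbs :=
          Finset.sum_lt_sum (fun e _ => (hconf' e).1) ⟨e₁, Finset.mem_univ e₁, (hconf' e₁).2 he₁⟩
        omega
      have hrow' : ∀ u, ∑ v, D' (u, v) = 0 := by
        intro u
        simp only [hD']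
        rw [Finset.sum_sub_distrib, hrow u, hγrow u]
        ring
      have hcol' : ∀ v, ∑ u, D' (u, v) = 0 := by
        intro v
        simp only [hD']
        rw [Finset.sum_sub_distrib, hcol v, hγcol v]
        ring
      obtain ⟨k, γ, hsum, hprop⟩ := ih D' hN' hrow' hcol'
      refine ⟨k + 1, fun i => if i = k then γ₀ else γ i, ?_, ?_⟩
      · intro e
        rw [Finset.sum_range_succ]
        have : ∑ i ∈ Finset.range k, (if i = k then γ₀ else γ i) e
            = ∑ i ∈ Finset.range k, γ i e := by
          refine Finset.sum_congr rfl fun i hi => ?_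
          rw [if_neg (by simp at hi; omega)]
        rw [this]
        beta_reduce
        rw [if_pos rfl, hsum e]
        simp only [hD']
        ring
      · intro i hi
        by_cases hik : i = k
        · simp only [hik, if_pos rfl]
          exact ⟨hγrow, hγcol, hγne, hγconf⟩
        · simp only [if_neg hik]
          obtain ⟨p1, p2, p3, p4⟩ := hprop i (by omega)
          refine ⟨p1, p2, p3, fun e => ?_⟩
          rcases p4 e with h | ⟨h1, h2⟩ | ⟨h1, h2⟩
          · exact Or.inl h
          · refine Or.inr (Or.inl ⟨h1, ?_⟩)
            simp only [hD'] at h2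
            rcases hγconf e with g | ⟨g1, g2⟩ | ⟨g1, g2⟩ <;> omega
          · refine Or.inr (Or.inr ⟨h1, ?_⟩)
            simp only [hD'] at h2
            rcases hγconf e with g | ⟨g1, g2⟩ | ⟨g1, g2⟩ <;> omega
    · push_neg at hD
      exact ⟨0, fun _ _ => 0, fun e => by simp [hD e], fun i hi => absurd hi (by omega)⟩

private lemma mCost_cast (d m : V × V → ℕ) :
    ((mCost d m : ℤ)) = ∑ e : V × V, (d e : ℤ) * (m e : ℤ) := by
  unfold mCost
  push_cast
  rfl

private lemma feas_shift (d : V × V → ℕ) (A : Set (V × V)) (din dout : V → ℕ)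
    (x : V × V → ℕ) (g : V × V → ℤ)
    (hx : DegFeasible A din dout x)
    (hrowg : ∀ u, ∑ v, g (u, v) = 0) (hcolg : ∀ v, ∑ u, g (u, v) = 0)
    (hsupp : ∀ e, e ∉ A → g e = 0) (hnn : ∀ e, 0 ≤ (x e : ℤ) + g e) :
    DegFeasible A din dout (fun e => ((x e : ℤ) + g e).toNat) ∧
    ((mCost d (fun e => ((x e : ℤ) + g e).toNat) : ℤ)
      = (mCost d x : ℤ) + ∑ e : V × V, (d e : ℤ) * g e) := by
  have hcast : ∀ e, ((((x e : ℤ) + g e).toNat : ℤ)) = (x e : ℤ) + g e :=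
    fun e => Int.toNat_of_nonneg (hnn e)
  constructor
  · refine ⟨?_, ?_, ?_⟩
    · intro p hp
      have h1 := hx.1 p hp
      have h2 := hsupp p hp
      simp [h1, h2]
    · intro v
      have hz : ((∑ w, ((x (v, w) : ℤ) + g (v, w)).toNat : ℕ) : ℤ) = (dout v : ℤ) := by
        rw [Nat.cast_sum]
        rw [Finset.sum_congr rfl (fun w _ => hcast (v, w))]
        rw [Finset.sum_add_distrib, hrowg v, ← Nat.cast_sum, hx.2.1 v]
        ring
      exact_mod_cast hz
    · intro v
      have hz : ((∑ w, ((x (w, v) : ℤ) + g (w, v)).toNat : ℕ) : ℤ) = (din v : ℤ) := by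
        rw [Nat.cast_sum]
        rw [Finset.sum_congr rfl (fun w _ => hcast (w, v))]
        rw [Finset.sum_add_distrib, hcolg v, ← Nat.cast_sum, hx.2.2 v]
        ring
      exact_mod_cast hz
  · rw [mCost_cast, mCost_cast]
    rw [Finset.sum_congr rfl (fun e _ => by rw [hcast e] : ∀ e ∈ Finset.univ,
      (d e : ℤ) * ((((x e : ℤ) + g e).toNat : ℕ) : ℤ) = (d e : ℤ) * ((x e : ℤ) + g e))]
    rw [← Finset.sum_add_distrib]
    refine Finset.sum_congr rfl fun e _ => ?_
    ring

/-- If `r` is a minimum-cost degree-feasible multiplicity function and some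
degree-feasible multiplicity function contains a member of `F`, then there is a multiplicity
function `c'` that is degree-feasible, contains a member of `F`, has minimum cost among all
such functions, and satisfies `|r(u,v) − c'(u,v)| ≤ s(F)` for all `u, v`. -/
theorem exists_close_optimal_connected_solution
    (d : V × V → ℕ) (A : Set (V × V)) (din dout : V → ℕ)
    (F : Finset (Finset (V × V))) (r : V × V → ℕ)
    (hr : DegFeasible A din dout r)
    (hrmin : ∀ m : V × V → ℕ, DegFeasible A din dout m → mCost d r ≤ mCost d m)
    (hex : ∃ m : V × V → ℕ, DegFeasible A din dout m ∧ ContainsMember F m) :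
    ∃ c' : V × V → ℕ,
      DegFeasible A din dout c' ∧
      ContainsMember F c' ∧
      (∀ m : V × V → ℕ, DegFeasible A din dout m → ContainsMember F m →
        mCost d c' ≤ mCost d m) ∧
      (∀ u v : V, |(r (u, v) : ℤ) - (c' (u, v) : ℤ)| ≤ ((F.sup Finset.card : ℕ) : ℤ)) := by
  classical
  -- choose a minimum-cost solution among those containing a member
  set S1 : Set ℕ := {n | ∃ m : V × V → ℕ,
    DegFeasible A din dout m ∧ ContainsMember F m ∧ mCost d m = n} with hS1
  have hS1ne : S1.Nonempty := by
    obtain ⟨m, hm1, hm2⟩ := hex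
    exact ⟨mCost d m, m, hm1, hm2, rfl⟩
  obtain ⟨m₁, hm₁f, hm₁c, hm₁cost⟩ := Nat.sInf_mem hS1ne
  -- among those, choose one of minimum deviation from r
  set S2 : Set ℕ := {k | ∃ m : V × V → ℕ,
    DegFeasible A din dout m ∧ ContainsMember F m ∧ mCost d m = sInf S1 ∧
    (∑ e : V × V, ((m e : ℤ) - (r e : ℤ)).natAbs) = k} with hS2
  have hS2ne : S2.Nonempty := ⟨_, m₁, hm₁f, hm₁c, hm₁cost, rfl⟩
  obtain ⟨c, hcf, hcc, hccost, hcdev⟩ := Nat.sInf_mem hS2ne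
  obtain ⟨B, hBF, hB1⟩ := hcc
  set D : V × V → ℤ := fun e => (c e : ℤ) - (r e : ℤ) with hDdef
  have hrowD : ∀ u, ∑ v, D (u, v) = 0 := by
    intro u
    simp only [hDdef]
    rw [Finset.sum_sub_distrib, ← Nat.cast_sum, ← Nat.cast_sum, hcf.2.1 u, hr.2.1 u]
    ring
  have hcolD : ∀ v, ∑ u, D (u, v) = 0 := by
    intro v
    simp only [hDdef]
    rw [Finset.sum_sub_distrib, ← Nat.cast_sum, ← Nat.cast_sum, hcf.2.2 v, hr.2.2 v]
    ring
  obtain ⟨k, γ, hsum, hprop⟩ :=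
    exists_decomp (∑ e : V × V, (D e).natAbs) D le_rfl hrowD hcolD
  -- the key claim: every cycle in the decomposition must "block" on an edge of B
  have key : ∀ i, i < k → ∃ e ∈ B, γ i e = 1 ∧ c e = 1 := by
    intro i hik
    obtain ⟨hg_row, hg_col, hg_ne, hg_conf⟩ := hprop i hik
    have hsuppγ : ∀ e, e ∉ A → γ i e = 0 := by
      intro e he
      have h1 := hr.1 e he
      have h2 := hcf.1 e he
      have hDe : D e = 0 := by simp [hDdef, h1, h2]
      rcases hg_conf e with h | ⟨_, h⟩ | ⟨_, h⟩ <;> omega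
    -- r + γ i is feasible, so its cost is at least that of r
    have hplusnn : ∀ e, 0 ≤ (r e : ℤ) + γ i e := by
      intro e
      have hc0 : (0 : ℤ) ≤ (c e : ℤ) := Int.natCast_nonneg _
      have hr0 : (0 : ℤ) ≤ (r e : ℤ) := Int.natCast_nonneg _
      have hDe : D e = (c e : ℤ) - (r e : ℤ) := by simp [hDdef]
      rcases hg_conf e with h | ⟨h1, h2⟩ | ⟨h1, h2⟩ <;> omega
    obtain ⟨hmpf, hmpcost⟩ := feas_shift d A din dout r (γ i) hr hg_row hg_col hsuppγ hplusnn
    have hZnn : 0 ≤ ∑ e : V × V, (d e : ℤ) * γ i e := by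
      have h1 : (mCost d r : ℤ) ≤ (mCost d (fun e => ((r e : ℤ) + γ i e).toNat) : ℤ) := by
        exact_mod_cast hrmin _ hmpf
      omega
    -- suppose no blocking edge: then c - γ i still contains B, is cheaper or equal, and closer
    by_contra hbad
    push_neg at hbad
    have hminusnn : ∀ e, 0 ≤ (c e : ℤ) + (- γ i e) := by
      intro e
      have hc0 : (0 : ℤ) ≤ (c e : ℤ) := Int.natCast_nonneg _
      have hr0 : (0 : ℤ) ≤ (r e : ℤ) := Int.natCast_nonneg _
      have hDe : D e = (c e : ℤ) - (r e : ℤ) := by simp [hDdef]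
      rcases hg_conf e with h | ⟨h1, h2⟩ | ⟨h1, h2⟩ <;> omega
    obtain ⟨hmmf, hmmcost⟩ := feas_shift d A din dout c (fun e => - γ i e) hcf
      (fun u => by rw [Finset.sum_neg_distrib, hg_row u]; ring)
      (fun v => by rw [Finset.sum_neg_distrib, hg_col v]; ring)
      (fun e he => by simp [hsuppγ e he]) hminusnn
    beta_reduce at hmmf hmmcost
    set mm : V × V → ℕ := fun e => ((c e : ℤ) + - γ i e).toNat with hmm
    have hmmcont : ContainsMember F mm := by
      refine ⟨B, hBF, fun e he => ?_⟩
      have h1 : 1 ≤ c e := hB1 e he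
      have h2 : (1 : ℤ) ≤ (c e : ℤ) + - γ i e := by
        rcases hg_conf e with h | ⟨hg1, _⟩ | ⟨hg1, _⟩
        · rw [h]; push_cast; omega
        · have := hbad e he hg1
          rw [hg1]; push_cast; omega
        · rw [hg1]; push_cast; omega
      have h3 : ((mm e : ℕ) : ℤ) = (c e : ℤ) + - γ i e := Int.toNat_of_nonneg (hminusnn e)
      omega
    have hmmS1 : mCost d mm ∈ S1 := ⟨mm, hmmf, hmmcont, rfl⟩
    have hle : sInf S1 ≤ mCost d mm := Nat.sInf_le hmmS1
    have hZzero : ∑ e : V × V, (d e : ℤ) * (- γ i e) = - ∑ e : V × V, (d e : ℤ) * γ i e := by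
      rw [← Finset.sum_neg_distrib]
      exact Finset.sum_congr rfl fun e _ => by ring
    have hmmcosteq : mCost d mm = sInf S1 := by
      have h1 : (mCost d mm : ℤ) = (mCost d c : ℤ) - ∑ e : V × V, (d e : ℤ) * γ i e := by
        rw [hmmcost, hZzero]; ring
      have h2 : ((sInf S1 : ℕ) : ℤ) ≤ (mCost d mm : ℤ) := by exact_mod_cast hle
      have h3 : (mCost d c : ℤ) = ((sInf S1 : ℕ) : ℤ) := by exact_mod_cast hccost
      omega
    -- deviation strictly decreases: contradiction with minimality of sInf S2
    have hdevmem : (∑ e : V × V, ((mm e : ℤ) - (r e : ℤ)).natAbs) ∈ S2 :=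
      ⟨mm, hmmf, hmmcont, hmmcosteq, rfl⟩
    have hdevle : sInf S2 ≤ ∑ e : V × V, ((mm e : ℤ) - (r e : ℤ)).natAbs := Nat.sInf_le hdevmem
    have hdevlt : (∑ e : V × V, ((mm e : ℤ) - (r e : ℤ)).natAbs)
        < ∑ e : V × V, (D e).natAbs := by
      obtain ⟨e₁, he₁⟩ := hg_ne
      have hmmc : ∀ e, (mm e : ℤ) - (r e : ℤ) = D e - γ i e := by
        intro e
        have h3 : ((mm e : ℕ) : ℤ) = (c e : ℤ) + - γ i e := Int.toNat_of_nonneg (hminusnn e)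
        simp only [hDdef]
        omega
      refine Finset.sum_lt_sum (fun e _ => ?_) ⟨e₁, Finset.mem_univ e₁, ?_⟩
      · rw [hmmc e]
        rcases hg_conf e with h | ⟨h1, h2⟩ | ⟨h1, h2⟩ <;> omega
      · rw [hmmc e₁]
        rcases hg_conf e₁ with h | ⟨h1, h2⟩ | ⟨h1, h2⟩ <;> omega
    have hDsum2 : (∑ e : V × V, (D e).natAbs) = sInf S2 := by
      rw [← hcdev]
    omega
  choose f hfB hf1 hfc using key
  have hkB : k ≤ B.card := by
    rcases Nat.eq_zero_or_pos k with rfl | hk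
    · exact Nat.zero_le _
    obtain ⟨e₀, _⟩ := (hprop 0 hk).2.2.1
    haveI : Nonempty (V × V) := ⟨e₀⟩
    set f' : ℕ → V × V := fun i => if h : i < k then f i h else Classical.arbitrary _ with hf'
    have hf'eq : ∀ i (h : i < k), f' i = f i h := by
      intro i h
      simp only [hf', dif_pos h]
    have h1 : (Finset.range k).card ≤ B.card := by
      refine Finset.card_le_card_of_injOn f' (fun i hi => ?_) ?_
      · rw [hf'eq i (Finset.mem_range.1 hi)]
        exact hfB i (Finset.mem_range.1 hi)
      intro i hi j hj hij
      simp only [Finset.coe_range, Set.mem_Iio] at hi hj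
      by_contra hne
      rw [hf'eq i hi, hf'eq j hj] at hij
      set e := f i hi with he
      have hei : γ i e = 1 := hf1 i hi
      have hej : γ j e = 1 := by rw [hij]; exact hf1 j hj
      have hce : c e = 1 := hfc i hi
      have hDe1 : 1 ≤ D e := by
        rcases (hprop i hi).2.2.2 e with h | ⟨_, h⟩ | ⟨h, _⟩ <;> omega
      have hterms : ∀ t ∈ Finset.range k, 0 ≤ γ t e := by
        intro t ht
        rcases (hprop t (Finset.mem_range.1 ht)).2.2.2 e with h | ⟨h, _⟩ | ⟨_, h⟩ <;> omega
      have hpair : ({i, j} : Finset ℕ) ⊆ Finset.range k := by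
        intro t ht
        simp only [Finset.mem_insert, Finset.mem_singleton] at ht
        rcases ht with rfl | rfl <;> exact Finset.mem_range.2 (by omega)
      have h2 : (2 : ℤ) ≤ ∑ t ∈ Finset.range k, γ t e := by
        have := Finset.sum_le_sum_of_subset_of_nonneg hpair
          (fun t ht _ => hterms t ht)
        rwa [Finset.sum_pair hne, hei, hej] at this
      rw [hsum e] at h2
      have hre : (0 : ℤ) ≤ (r e : ℤ) := Int.natCast_nonneg _
      simp only [hDdef] at h2
      have : (c e : ℤ) = 1 := by exact_mod_cast hce
      omega
    rwa [Finset.card_range] at h1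
  refine ⟨c, hcf, ⟨B, hBF, hB1⟩, ?_, ?_⟩
  · intro m hmf hmc
    rw [hccost]
    exact Nat.sInf_le ⟨m, hmf, hmc, rfl⟩
  · intro u v
    have h1 : |(r (u, v) : ℤ) - (c (u, v) : ℤ)| = |D (u, v)| := by
      simp only [hDdef]
      rw [abs_sub_comm]
    rw [h1, ← hsum (u, v)]
    calc |∑ i ∈ Finset.range k, γ i (u, v)|
        ≤ ∑ i ∈ Finset.range k, |γ i (u, v)| := Finset.abs_sum_le_sum_abs _ _
      _ ≤ ∑ _i ∈ Finset.range k, (1 : ℤ) := by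
          refine Finset.sum_le_sum fun i hi => ?_
          rcases (hprop i (Finset.mem_range.1 hi)).2.2.2 (u, v) with h | ⟨h, _⟩ | ⟨h, _⟩ <;>
            rw [h] <;> norm_num
      _ = (k : ℤ) := by rw [Finset.sum_const, Finset.card_range]; ring
      _ ≤ ((F.sup Finset.card : ℕ) : ℤ) := by
          have h2 : B.card ≤ F.sup Finset.card := Finset.le_sup hBF
          exact_mod_cast le_trans hkB h2
end

section
/- Let r be a degree-feasible multiplicity function (for demands in, out and allowed edge set A) that minimizes cost among all degree-feasible multiplicity functions, and suppose at least one degree-feasible multiplicity function contains a member of F. Define f(u,v) = max(r(u,v) − s(F) − 1, 0), and define the reduced demands in′(v) = in(v) − ∑_{w} f(w,v) and out′(v) = out(v) − ∑_{w} f(v,w). Then for every multiplicity function m* that is degree-feasible for demands (in′, out′) with the same allowed edge set A, contains a member of F, and minimizes cost among all such functions, the multiplicity function f + m* is degree-feasible for demands (in, out), contains a member of F, and minimizes cost among all degree-feasible multiplicity functions for (in, out) that contain a member of F. -/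
variable {V : Type*} [Fintype V] [DecidableEq V]

def dlt (r m : V × V → ℕ) (p : V × V) : ℤ := (r p : ℤ) - (m p : ℤ)

def loB (r m : V × V → ℕ) (B : Finset (V × V)) (p : V × V) : ℤ :=
  min 0 (if p ∈ B then max (dlt r m p) (1 - (m p : ℤ)) else dlt r m p)

def Stp (r m : V × V → ℕ) (B : Finset (V × V)) (s t : V × Bool) : Prop :=
  (s.2 = false ∧ t.2 = true ∧ 1 ≤ dlt r m (s.1, t.1)) ∨
  (s.2 = true ∧ t.2 = false ∧ loB r m B (t.1, s.1) ≤ -1)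

theorem loB_le_neg_one {r m : V × V → ℕ} {B : Finset (V × V)} {p : V × V}
    (h : loB r m B p ≤ -1) :
    dlt r m p ≤ -1 ∧ (1 : ℤ) ≤ (m p : ℤ) ∧ (p ∈ B → (2 : ℤ) ≤ (m p : ℤ)) := by
  unfold loB at h
  by_cases hp : p ∈ B
  · rw [if_pos hp] at h
    have h2 : max (dlt r m p) (1 - (m p : ℤ)) ≤ -1 := by omega
    have h3 := max_le_iff.mp h2
    exact ⟨h3.1, by omega, fun _ => by omega⟩
  · rw [if_neg hp] at h
    have h2 : dlt r m p ≤ -1 := by omega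
    have h3 : (0 : ℤ) ≤ (r p : ℤ) := Int.natCast_nonneg _
    unfold dlt at h2 ⊢
    exact ⟨h2, by omega, fun hb => absurd hb hp⟩

theorem loB_eq_zero_of_pos {r m : V × V → ℕ} {B : Finset (V × V)} {p : V × V}
    (h : 1 ≤ dlt r m p) : loB r m B p = 0 := by
  unfold loB
  by_cases hp : p ∈ B
  · rw [if_pos hp]
    have : (0:ℤ) ≤ max (dlt r m p) (1 - (m p : ℤ)) := le_trans (by omega) (le_max_left _ _)
    omega
  · rw [if_neg hp]; omega

theorem sum_dlt_row (r m : V × V → ℕ) {A : Set (V × V)} {din dout : V → ℕ}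
    (hr : DegFeasible A din dout r) (hm : DegFeasible A din dout m) (x : V) :
    ∑ y : V, dlt r m (x, y) = 0 := by
  unfold dlt
  rw [Finset.sum_sub_distrib]
  have h1 : ∑ y : V, ((r (x, y) : ℤ)) = (dout x : ℤ) := by
    rw [← Nat.cast_sum]; exact congrArg Nat.cast (hr.2.1 x)
  have h2 : ∑ y : V, ((m (x, y) : ℤ)) = (dout x : ℤ) := by
    rw [← Nat.cast_sum]; exact congrArg Nat.cast (hm.2.1 x)
  rw [h1, h2, sub_self]

theorem sum_dlt_col (r m : V × V → ℕ) {A : Set (V × V)} {din dout : V → ℕ}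
    (hr : DegFeasible A din dout r) (hm : DegFeasible A din dout m) (y : V) :
    ∑ x : V, dlt r m (x, y) = 0 := by
  unfold dlt
  rw [Finset.sum_sub_distrib]
  have h1 : ∑ x : V, ((r (x, y) : ℤ)) = (din y : ℤ) := by
    rw [← Nat.cast_sum]; exact congrArg Nat.cast (hr.2.2 y)
  have h2 : ∑ x : V, ((m (x, y) : ℤ)) = (din y : ℤ) := by
    rw [← Nat.cast_sum]; exact congrArg Nat.cast (hm.2.2 y)
  rw [h1, h2, sub_self]

/-- The reachability (cut) argument: under the degree hypotheses, the tail of `e` can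
reach the head of `e` in the residual graph. -/
theorem reach_of_big {A : Set (V × V)} {din dout : V → ℕ} (r m : V × V → ℕ)
    (B : Finset (V × V)) (hr : DegFeasible A din dout r) (hm : DegFeasible A din dout m)
    (e : V × V) (he : m e + B.card + 1 ≤ r e) :
    Relation.ReflTransGen (Stp r m B) (e.2, true) (e.1, false) := by
  classical
  by_contra hreach
  set Rch : V × Bool → Prop := Relation.ReflTransGen (Stp r m B) (e.2, true) with hR
  set Sin : Finset V := Finset.univ.filter (fun y => Rch (y, true)) with hSin
  set Sout : Finset V := Finset.univ.filter (fun x => Rch (x, false)) with hSout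
  have hδe : (B.card : ℤ) + 1 ≤ dlt r m e := by unfold dlt; push_cast; omega
  -- closure facts
  have hclos1 : ∀ x ∈ Sout, ∀ y, y ∉ Sin → dlt r m (x, y) ≤ 0 := by
    intro x hx y hy
    by_contra hpos
    push_neg at hpos
    have : Rch (y, true) := by
      refine Relation.ReflTransGen.tail (by simpa [hSout] using hx) ?_
      exact Or.inl ⟨rfl, rfl, show 1 ≤ dlt r m (x, y) by omega⟩
    exact hy (by simpa [hSin] using this)
  have hclos2 : ∀ y ∈ Sin, ∀ x, x ∉ Sout → ¬ (loB r m B (x, y) ≤ -1) := by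
    intro y hy x hx hlo
    have : Rch (x, false) := by
      refine Relation.ReflTransGen.tail (by simpa [hSin] using hy) ?_
      exact Or.inr ⟨rfl, rfl, hlo⟩
    exact hx (by simpa [hSout] using this)
  -- A1 : the core double sum is nonnegative
  have hA1 : (0 : ℤ) ≤ ∑ x ∈ Sout, ∑ y ∈ Sin, dlt r m (x, y) := by
    refine Finset.sum_nonneg ?_
    intro x hx
    have hsplit := Finset.sum_filter_add_sum_filter_not Finset.univ
      (fun y => Rch (y, true)) (fun y => dlt r m (x, y))
    have hzero : ∑ y : V, dlt r m (x, y) = 0 := sum_dlt_row r m hr hm x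
    have hnp : ∑ y ∈ Finset.univ.filter (fun y => ¬ Rch (y, true)), dlt r m (x, y) ≤ 0 := by
      refine Finset.sum_nonpos ?_
      intro y hy
      simp only [Finset.mem_filter] at hy
      exact hclos1 x hx y (by simp [hSin, hy.2])
    have : ∑ y ∈ Sin, dlt r m (x, y)
        + ∑ y ∈ Finset.univ.filter (fun y => ¬ Rch (y, true)), dlt r m (x, y) = 0 := by
      rw [hSin]; rw [hsplit]; exact hzero
    omega
  -- A2 : the same double sum is at most -1
  have hein : e.2 ∈ Sin := by
    simp only [hSin, Finset.mem_filter, Finset.mem_univ, true_and, hR]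
    exact Relation.ReflTransGen.refl
  have heout : e.1 ∉ Sout := by simpa [hSout, hR] using hreach
  set SoutC : Finset V := Finset.univ.filter (fun x => ¬ Rch (x, false)) with hSoutC
  have heoutC : e.1 ∈ SoutC := by simpa [hSoutC, hR] using hreach
  have hT : (1 : ℤ) ≤ ∑ p ∈ SoutC ×ˢ Sin, dlt r m p := by
    have heS : e ∈ SoutC ×ˢ Sin := by
      rw [Finset.mem_product]; exact ⟨heoutC, hein⟩
    rw [← Finset.add_sum_erase _ _ heS]
    have hbound : ∀ p ∈ (SoutC ×ˢ Sin).erase e,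
        (if p ∈ B then (-1 : ℤ) else 0) ≤ dlt r m p := by
      intro p hp
      have hp' := Finset.mem_of_mem_erase hp
      rw [Finset.mem_product] at hp'
      have hx : p.1 ∉ Sout := by
        have := hp'.1; simp only [hSoutC, Finset.mem_filter] at this
        simp [hSout, this.2]
      have hy : p.2 ∈ Sin := hp'.2
      by_cases hneg : dlt r m p ≤ -1
      · have hnb := hclos2 p.2 hy p.1 hx
        rw [show ((p.1 : V), (p.2 : V)) = p from rfl] at hnb
        by_cases hpB : p ∈ B
        · rw [if_pos hpB]
          unfold loB at hnb
          rw [if_pos hpB] at hnb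
          push_neg at hnb
          have hmax := (lt_min_iff.mp hnb).2
          have hm1 : (0:ℤ) ≤ 1 - (m p : ℤ) := by
            rcases le_max_iff.mp (by omega : (0:ℤ) ≤ max (dlt r m p) (1 - (m p : ℤ))) with h | h
            · omega
            · exact h
          have hrnn : (0:ℤ) ≤ (r p : ℤ) := Int.natCast_nonneg _
          unfold dlt at hneg ⊢
          omega
        · exfalso
          apply hnb
          unfold loB
          rw [if_neg hpB]
          omega
      · push_neg at hneg
        by_cases hpB : p ∈ B <;> simp [hpB] <;> omega
    have hsum2 : (-(B.card : ℤ)) ≤ ∑ p ∈ (SoutC ×ˢ Sin).erase e, dlt r m p := by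
      calc (-(B.card : ℤ))
          ≤ ∑ p ∈ (SoutC ×ˢ Sin).erase e, (if p ∈ B then (-1 : ℤ) else 0) := by
            rw [Finset.sum_ite, Finset.sum_const_zero, add_zero, Finset.sum_const]
            have hcard : (((SoutC ×ˢ Sin).erase e).filter (fun p => p ∈ B)).card ≤ B.card := by
              apply Finset.card_le_card
              intro p hp
              exact (Finset.mem_filter.mp hp).2
            simp only [nsmul_eq_mul, mul_neg, mul_one]
            omega
        _ ≤ _ := Finset.sum_le_sum hbound
    omega
  have hA2 : ∑ x ∈ Sout, ∑ y ∈ Sin, dlt r m (x, y) ≤ -1 := by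
    have hswap : ∑ x ∈ Sout, ∑ y ∈ Sin, dlt r m (x, y)
        = ∑ y ∈ Sin, ∑ x ∈ Sout, dlt r m (x, y) := Finset.sum_comm
    have hprod : ∑ p ∈ SoutC ×ˢ Sin, dlt r m p
        = ∑ x ∈ SoutC, ∑ y ∈ Sin, dlt r m (x, y) := Finset.sum_product _ _ _
    have hcols : ∀ y ∈ Sin, ∑ x ∈ Sout, dlt r m (x, y)
        + ∑ x ∈ SoutC, dlt r m (x, y) = 0 := by
      intro y _
      have hsplit := Finset.sum_filter_add_sum_filter_not Finset.univ
        (fun x => Rch (x, false)) (fun x => dlt r m (x, y))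
      have hzero : ∑ x : V, dlt r m (x, y) = 0 := sum_dlt_col r m hr hm y
      rw [hSout, hSoutC]; rw [hsplit]; exact hzero
    have : ∑ y ∈ Sin, ∑ x ∈ Sout, dlt r m (x, y)
        = - ∑ y ∈ Sin, ∑ x ∈ SoutC, dlt r m (x, y) := by
      rw [← Finset.sum_neg_distrib]
      refine Finset.sum_congr rfl ?_
      intro y hy
      have := hcols y hy
      omega
    rw [hswap, this]
    have : ∑ y ∈ Sin, ∑ x ∈ SoutC, dlt r m (x, y)
        = ∑ x ∈ SoutC, ∑ y ∈ Sin, dlt r m (x, y) := Finset.sum_comm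
    rw [this, ← hprod]
    omega
  omega

section PathAux2
variable {α : Type*}

inductive IsPath (r : α → α → Prop) : α → List α → α → Prop
  | nil (a : α) : IsPath r a [] a
  | cons {a b c : α} {l : List α} : r a b → IsPath r b l c → IsPath r a (b :: l) c

theorem IsPath.append_single {r : α → α → Prop} {a b c : α} {l : List α}
    (h : IsPath r a l b) (hbc : r b c) : IsPath r a (l ++ [c]) c := by
  induction h with
  | nil a => exact .cons hbc (.nil c)
  | cons hab h ih => exact .cons hab (ih hbc)

theorem isPath_of_reflTransGen {r : α → α → Prop} {a c : α}
    (h : Relation.ReflTransGen r a c) : ∃ l, IsPath r a l c := by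
  induction h with
  | refl => exact ⟨[], .nil a⟩
  | tail _ hbc ih => exact ⟨_, ih.choose_spec.append_single hbc⟩

theorem isPath_split {r : α → α → Prop} {b c : α} {l₂ : List α} :
    ∀ (l₁ : List α) {a : α}, IsPath r a (l₁ ++ b :: l₂) c → IsPath r b l₂ c := by
  intro l₁
  induction l₁ with
  | nil => intro a h; cases h with | cons _ h => exact h
  | cons x l₁ ih => intro a h; cases h with | cons _ h => exact ih h

theorem isPath_dedup {r : α → α → Prop} [DecidableEq α] :
    ∀ (n : ℕ) (l : List α) (a c : α), l.length ≤ n → IsPath r a l c →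
      ∃ l', IsPath r a l' c ∧ l' ⊆ l ∧ (a :: l').Nodup := by
  intro n
  induction n with
  | zero =>
    intro l a c hlen h
    have : l = [] := List.length_eq_zero_iff.mp (Nat.le_zero.mp hlen)
    subst this
    exact ⟨[], h, by simp, by simp⟩
  | succ n ih =>
    intro l a c hlen h
    by_cases ha : a ∈ l
    · obtain ⟨s, t, rfl⟩ := List.append_of_mem ha
      have h2 : IsPath r a t c := isPath_split s h
      have hlen2 : t.length ≤ n := by
        have := hlen; simp [List.length_append] at this; omega
      obtain ⟨l', h1', h2', h3'⟩ := ih t a c hlen2 h2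
      exact ⟨l', h1', fun x hx => by
        have := h2' hx; exact List.mem_append_right s (List.mem_cons_of_mem a this), h3'⟩
    · cases h with
      | nil a => exact ⟨[], .nil a, by simp, by simp⟩
      | @cons a b c l hab hpath =>
        have hlen2 : l.length ≤ n := by simp at hlen; omega
        obtain ⟨l', h1', h2', h3'⟩ := ih l b c hlen2 hpath
        refine ⟨b :: l', .cons hab h1', ?_, ?_⟩
        · intro x hx
          rcases List.mem_cons.mp hx with rfl | hx
          · simp
          · exact List.mem_cons_of_mem b (h2' hx)
        · refine List.nodup_cons.mpr ⟨?_, h3'⟩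
          intro hmem
          rcases List.mem_cons.mp hmem with rfl | hmem
          · exact ha (by simp)
          · exact ha (List.mem_cons_of_mem b (h2' hmem))

end PathAux2

theorem flow_of_path (r m : V × V → ℕ) (B : Finset (V × V)) :
    ∀ (l : List (V × Bool)) (a c : V × Bool), IsPath (Stp r m B) a l c → (a :: l).Nodup →
    ∃ g : V × V → ℤ,
      (∀ p : V × V, g p = 0 ∨
        (g p = 1 ∧ 1 ≤ dlt r m p ∧ (p.1, false) ∈ a :: l ∧ (p.2, true) ∈ l) ∨
        (g p = -1 ∧ loB r m B p ≤ -1 ∧ (p.1, false) ∈ l ∧ (p.2, true) ∈ a :: l)) ∧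
      (∀ x : V, ∑ y : V, g (x, y) =
        (if a = (x, false) then 1 else 0) - (if c = (x, false) then 1 else 0)) ∧
      (∀ y : V, ∑ x : V, g (x, y) =
        (if c = (y, true) then 1 else 0) - (if a = (y, true) then 1 else 0)) := by
  intro l
  induction l with
  | nil =>
    intro a c hpath _
    cases hpath with
    | nil =>
      exact ⟨fun _ => 0, fun p => Or.inl rfl, fun x => by simp, fun y => by simp⟩
  | cons b l ih =>
    intro a c hpath hnodup
    cases hpath with
    | cons hab hpath =>
      have hnodup' : (b :: l).Nodup := hnodup.of_cons
      have hanotin : a ∉ b :: l := (List.nodup_cons.mp hnodup).1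
      obtain ⟨g, hsupp, hrow, hcol⟩ := ih b c hpath hnodup'
      rcases hab with ⟨ha2, hb2, hfwd⟩ | ⟨ha2, hb2, hbwd⟩
      · -- forward step
        set p₀ : V × V := (a.1, b.1) with hp₀
        have hg0 : g p₀ = 0 := by
          rcases hsupp p₀ with h | ⟨_, _, _, h4⟩ | ⟨_, _, h3, _⟩
          · exact h
          · exfalso
            have : (p₀.2, true) = b := by
              ext <;> simp [hp₀, hb2.symm]
            rw [this] at h4
            exact (List.nodup_cons.mp hnodup').1 h4
          · exfalso
            have : (p₀.1, false) = a := by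
              ext <;> simp [hp₀, ha2.symm]
            rw [this] at h3
            exact hanotin (List.mem_cons_of_mem b h3)
        refine ⟨fun q => g q + (if q = p₀ then 1 else 0), ?_, ?_, ?_⟩
        · intro p
          by_cases hp : p = p₀
          · subst hp
            refine Or.inr (Or.inl ⟨by simp [hg0], ?_, ?_, ?_⟩)
            · have : (p₀.1, p₀.2) = (a.1, b.1) := rfl
              simpa [hp₀] using hfwd
            · have : (p₀.1, false) = a := by ext <;> simp [hp₀, ha2.symm]
              rw [this]; simp
            · have : (p₀.2, true) = b := by ext <;> simp [hp₀, hb2.symm]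
              rw [this]; simp
          · simp only [if_neg hp, add_zero]
            rcases hsupp p with h | ⟨h1, h2, h3, h4⟩ | ⟨h1, h2, h3, h4⟩
            · exact Or.inl h
            · exact Or.inr (Or.inl ⟨h1, h2, List.mem_cons_of_mem a h3,
                List.mem_cons_of_mem b h4⟩)
            · exact Or.inr (Or.inr ⟨h1, h2, List.mem_cons_of_mem b h3,
                List.mem_cons_of_mem a h4⟩)
        · intro x
          have hsum : ∑ y : V, (if (x, y) = p₀ then (1:ℤ) else 0)
              = if x = a.1 then 1 else 0 := by
            simp only [hp₀, Prod.mk.injEq]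
            by_cases hx : x = a.1
            · simp [hx]
            · simp [hx]
          rw [Finset.sum_add_distrib, hrow x, hsum]
          have hb' : (b = (x, false)) = False := by
            simp only [eq_iff_iff, iff_false]
            intro hb; rw [hb] at hb2; simp at hb2
          have ha' : (a = (x, false)) ↔ (x = a.1) := by
            constructor
            · intro h; rw [h]
            · intro h; ext <;> simp [h, ha2]
          simp only [hb', if_false, ha']
          by_cases hx : x = a.1 <;> simp [hx] <;> ring
        · intro y
          have hsum : ∑ x : V, (if (x, y) = p₀ then (1:ℤ) else 0)
              = if y = b.1 then 1 else 0 := by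
            simp only [hp₀, Prod.mk.injEq]
            by_cases hy : y = b.1
            · simp [hy]
            · simp [hy]
          rw [Finset.sum_add_distrib, hcol y, hsum]
          have ha' : (a = (y, true)) = False := by
            simp only [eq_iff_iff, iff_false]
            intro h; rw [h] at ha2; simp at ha2
          have hb' : (b = (y, true)) ↔ (y = b.1) := by
            constructor
            · intro h; rw [h]
            · intro h; ext <;> simp [h, hb2]
          simp only [ha', if_false, hb']
          by_cases hy : y = b.1 <;> simp [hy] <;> ring
      · -- backward step
        set p₀ : V × V := (b.1, a.1) with hp₀
        have hg0 : g p₀ = 0 := by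
          rcases hsupp p₀ with h | ⟨_, _, _, h4⟩ | ⟨_, _, h3, _⟩
          · exact h
          · exfalso
            have : (p₀.2, true) = a := by ext <;> simp [hp₀, ha2.symm]
            rw [this] at h4
            exact hanotin (List.mem_cons_of_mem b h4)
          · exfalso
            have : (p₀.1, false) = b := by ext <;> simp [hp₀, hb2.symm]
            rw [this] at h3
            exact (List.nodup_cons.mp hnodup').1 h3
        refine ⟨fun q => g q + (if q = p₀ then -1 else 0), ?_, ?_, ?_⟩
        · intro p
          by_cases hp : p = p₀
          · subst hp
            refine Or.inr (Or.inr ⟨by simp [hg0], ?_, ?_, ?_⟩)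
            · simpa [hp₀] using hbwd
            · have : (p₀.1, false) = b := by ext <;> simp [hp₀, hb2.symm]
              rw [this]; simp
            · have : (p₀.2, true) = a := by ext <;> simp [hp₀, ha2.symm]
              rw [this]; simp
          · simp only [if_neg hp, add_zero]
            rcases hsupp p with h | ⟨h1, h2, h3, h4⟩ | ⟨h1, h2, h3, h4⟩
            · exact Or.inl h
            · exact Or.inr (Or.inl ⟨h1, h2, List.mem_cons_of_mem a h3,
                List.mem_cons_of_mem b h4⟩)
            · exact Or.inr (Or.inr ⟨h1, h2, List.mem_cons_of_mem b h3,
                List.mem_cons_of_mem a h4⟩)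
        · intro x
          have hsum : ∑ y : V, (if (x, y) = p₀ then (-1:ℤ) else 0)
              = if x = b.1 then -1 else 0 := by
            simp only [hp₀, Prod.mk.injEq]
            by_cases hx : x = b.1
            · simp [hx]
            · simp [hx]
          rw [Finset.sum_add_distrib, hrow x, hsum]
          have ha' : (a = (x, false)) = False := by
            simp only [eq_iff_iff, iff_false]
            intro h; rw [h] at ha2; simp at ha2
          have hb' : (b = (x, false)) ↔ (x = b.1) := by
            constructor
            · intro h; rw [h]
            · intro h; ext <;> simp [h, hb2]
          simp only [ha', if_false, hb']
          by_cases hx : x = b.1 <;> simp [hx] <;> ring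
        · intro y
          have hsum : ∑ x : V, (if (x, y) = p₀ then (-1:ℤ) else 0)
              = if y = a.1 then -1 else 0 := by
            simp only [hp₀, Prod.mk.injEq]
            by_cases hy : y = a.1
            · simp [hy]
            · simp [hy]
          rw [Finset.sum_add_distrib, hcol y, hsum]
          have hb' : (b = (y, true)) = False := by
            simp only [eq_iff_iff, iff_false]
            intro h; rw [h] at hb2; simp at hb2
          have ha' : (a = (y, true)) ↔ (y = a.1) := by
            constructor
            · intro h; rw [h]
            · intro h; ext <;> simp [h, ha2]
          simp only [hb', if_false, ha']
          by_cases hy : y = a.1 <;> simp [hy] <;> ring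

theorem augment_step (d : V × V → ℕ) (A : Set (V × V)) (din dout : V → ℕ)
    (r m : V × V → ℕ) (B : Finset (V × V))
    (hr : DegFeasible A din dout r) (hm : DegFeasible A din dout m)
    (hB : ∀ p ∈ B, 1 ≤ m p) (e : V × V) (he : m e + B.card + 1 ≤ r e) :
    ∃ m' r' : V × V → ℕ, DegFeasible A din dout m' ∧ DegFeasible A din dout r' ∧
      (∀ p ∈ B, 1 ≤ m' p) ∧ mCost d m' + mCost d r' = mCost d m + mCost d r ∧
      (∑ p : V × V, (dlt r m' p).natAbs) < ∑ p : V × V, (dlt r m p).natAbs := by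
  classical
  have hδe : (B.card : ℤ) + 1 ≤ dlt r m e := by unfold dlt; push_cast; omega
  have hreach := reach_of_big r m B hr hm e he
  obtain ⟨l₀, hpath₀⟩ := isPath_of_reflTransGen hreach
  obtain ⟨l, hpath, _, hnodup⟩ := isPath_dedup l₀.length l₀ _ _ le_rfl hpath₀
  obtain ⟨g, hsupp, hrow, hcol⟩ := flow_of_path r m B l (e.2, true) (e.1, false) hpath hnodup
  have hge : g e = 0 := by
    rcases hsupp e with h | ⟨_, _, _, h4⟩ | ⟨_, h2, _, _⟩
    · exact h
    · exact absurd h4 (List.nodup_cons.mp hnodup).1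
    · rw [loB_eq_zero_of_pos (by omega)] at h2; omega
  set gf : V × V → ℤ := fun q => g q + (if q = e then 1 else 0) with hgf
  have hgfe : gf e = 1 := by simp [hgf, hge]
  have hsup2 : ∀ p, gf p = 0 ∨ (gf p = 1 ∧ 1 ≤ dlt r m p) ∨
      (gf p = -1 ∧ loB r m B p ≤ -1) := by
    intro p
    by_cases hp : p = e
    · subst hp; exact Or.inr (Or.inl ⟨hgfe, by omega⟩)
    · simp only [hgf, if_neg hp, add_zero]
      rcases hsupp p with h | ⟨h1, h2, _, _⟩ | ⟨h1, h2, _, _⟩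
      · exact Or.inl h
      · exact Or.inr (Or.inl ⟨h1, h2⟩)
      · exact Or.inr (Or.inr ⟨h1, h2⟩)
  have hgrow : ∀ x, ∑ y : V, gf (x, y) = 0 := by
    intro x
    have hsum : ∑ y : V, (if ((x, y) : V × V) = e then (1:ℤ) else 0)
        = if x = e.1 then 1 else 0 := by
      simp only [Prod.ext_iff]
      by_cases hx : x = e.1 <;> simp [hx]
    simp only [hgf]
    rw [Finset.sum_add_distrib, hrow x, hsum]
    have h1 : ((e.2, true) = ((x : V), false)) = False := by simp
    have h2 : ((e.1, false) = ((x : V), false)) ↔ (x = e.1) := by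
      constructor
      · intro h; exact (Prod.ext_iff.mp h).1.symm
      · intro h; subst h; rfl
    simp only [h1, if_false, h2]
    by_cases hx : x = e.1 <;> simp [hx]
  have hgcol : ∀ y, ∑ x : V, gf (x, y) = 0 := by
    intro y
    have hsum : ∑ x : V, (if ((x, y) : V × V) = e then (1:ℤ) else 0)
        = if y = e.2 then 1 else 0 := by
      simp only [Prod.ext_iff]
      by_cases hy : y = e.2 <;> simp [hy]
    simp only [hgf]
    rw [Finset.sum_add_distrib, hcol y, hsum]
    have h1 : ((e.1, false) = ((y : V), true)) = False := by simp
    have h2 : ((e.2, true) = ((y : V), true)) ↔ (y = e.2) := by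
      constructor
      · intro h; exact (Prod.ext_iff.mp h).1.symm
      · intro h; subst h; rfl
    simp only [h1, if_false, h2]
    by_cases hy : y = e.2 <;> simp [hy]
  -- pointwise bounds
  have hmlow : ∀ p, (0 : ℤ) ≤ (m p : ℤ) + gf p := by
    intro p
    rcases hsup2 p with h | ⟨h1, _⟩ | ⟨h1, h2⟩
    · simp [h]
    · have : (0:ℤ) ≤ (m p : ℤ) := Int.natCast_nonneg _
      omega
    · have := (loB_le_neg_one h2).2.1
      omega
  have hrlow : ∀ p, (0 : ℤ) ≤ (r p : ℤ) - gf p := by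
    intro p
    have hrn : (0:ℤ) ≤ (r p : ℤ) := Int.natCast_nonneg _
    rcases hsup2 p with h | ⟨h1, h2⟩ | ⟨h1, _⟩
    · simp [h]
    · unfold dlt at h2
      have : (0:ℤ) ≤ (m p : ℤ) := Int.natCast_nonneg _
      omega
    · omega
  set m' : V × V → ℕ := fun p => ((m p : ℤ) + gf p).toNat with hm'
  set r' : V × V → ℕ := fun p => ((r p : ℤ) - gf p).toNat with hr'
  have hmz : ∀ p, (m' p : ℤ) = (m p : ℤ) + gf p := fun p => Int.toNat_of_nonneg (hmlow p)
  have hrz : ∀ p, (r' p : ℤ) = (r p : ℤ) - gf p := fun p => Int.toNat_of_nonneg (hrlow p)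
  have hgf0 : ∀ p, m p = 0 → r p = 0 → gf p = 0 := by
    intro p hm0 hr0
    have hδ0 : dlt r m p = 0 := by unfold dlt; rw [hm0, hr0]; simp
    rcases hsup2 p with h | ⟨_, h2⟩ | ⟨_, h2⟩
    · exact h
    · omega
    · have := (loB_le_neg_one h2).1; omega
  refine ⟨m', r', ⟨?_, ?_, ?_⟩, ⟨?_, ?_, ?_⟩, ?_, ?_, ?_⟩
  · -- m' support
    intro p hp
    have h0 : gf p = 0 := hgf0 p (hm.1 p hp) (hr.1 p hp)
    have : (m' p : ℤ) = 0 := by rw [hmz, h0, hm.1 p hp]; simp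
    exact_mod_cast this
  · -- m' row sums
    intro v
    have : ((∑ w : V, m' (v, w) : ℕ) : ℤ) = (dout v : ℤ) := by
      rw [Nat.cast_sum]
      have : ∑ w : V, (m' (v, w) : ℤ) = ∑ w : V, ((m (v, w) : ℤ) + gf (v, w)) :=
        Finset.sum_congr rfl (fun w _ => hmz (v, w))
      rw [this, Finset.sum_add_distrib, hgrow v, add_zero, ← Nat.cast_sum, hm.2.1 v]
    exact_mod_cast this
  · -- m' col sums
    intro v
    have : ((∑ w : V, m' (w, v) : ℕ) : ℤ) = (din v : ℤ) := by
      rw [Nat.cast_sum]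
      have : ∑ w : V, (m' (w, v) : ℤ) = ∑ w : V, ((m (w, v) : ℤ) + gf (w, v)) :=
        Finset.sum_congr rfl (fun w _ => hmz (w, v))
      rw [this, Finset.sum_add_distrib, hgcol v, add_zero, ← Nat.cast_sum, hm.2.2 v]
    exact_mod_cast this
  · -- r' support
    intro p hp
    have h0 : gf p = 0 := hgf0 p (hm.1 p hp) (hr.1 p hp)
    have : (r' p : ℤ) = 0 := by rw [hrz, h0, hr.1 p hp]; simp
    exact_mod_cast this
  · -- r' row sums
    intro v
    have : ((∑ w : V, r' (v, w) : ℕ) : ℤ) = (dout v : ℤ) := by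
      rw [Nat.cast_sum]
      have : ∑ w : V, (r' (v, w) : ℤ) = ∑ w : V, ((r (v, w) : ℤ) - gf (v, w)) :=
        Finset.sum_congr rfl (fun w _ => hrz (v, w))
      rw [this, Finset.sum_sub_distrib, hgrow v, sub_zero, ← Nat.cast_sum, hr.2.1 v]
    exact_mod_cast this
  · -- r' col sums
    intro v
    have : ((∑ w : V, r' (w, v) : ℕ) : ℤ) = (din v : ℤ) := by
      rw [Nat.cast_sum]
      have : ∑ w : V, (r' (w, v) : ℤ) = ∑ w : V, ((r (w, v) : ℤ) - gf (w, v)) :=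
        Finset.sum_congr rfl (fun w _ => hrz (w, v))
      rw [this, Finset.sum_sub_distrib, hgcol v, sub_zero, ← Nat.cast_sum, hr.2.2 v]
    exact_mod_cast this
  · -- containment
    intro p hp
    have hmp : (1 : ℤ) ≤ (m p : ℤ) := by exact_mod_cast hB p hp
    have : (1 : ℤ) ≤ (m' p : ℤ) := by
      rw [hmz]
      rcases hsup2 p with h | ⟨h1, _⟩ | ⟨h1, h2⟩
      · omega
      · omega
      · have := (loB_le_neg_one h2).2.2 hp
        omega
    exact_mod_cast this
  · -- cost conservation
    have : ((mCost d m' + mCost d r' : ℕ) : ℤ) = ((mCost d m + mCost d r : ℕ) : ℤ) := by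
      unfold mCost
      push_cast
      rw [← Finset.sum_add_distrib, ← Finset.sum_add_distrib]
      refine Finset.sum_congr rfl ?_
      intro p _
      rw [hmz, hrz]
      ring
    exact_mod_cast this
  · -- measure decrease
    have hptle : ∀ p, (dlt r m' p).natAbs ≤ (dlt r m p).natAbs := by
      intro p
      have heq : dlt r m' p = dlt r m p - gf p := by
        unfold dlt; rw [hmz]; ring
      rcases hsup2 p with h | ⟨h1, h2⟩ | ⟨h1, h2⟩
      · rw [heq, h]; omega
      · rw [heq, h1]; omega
      · have := (loB_le_neg_one h2).1
        rw [heq, h1]; omega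
    have hstrict : (dlt r m' e).natAbs < (dlt r m e).natAbs := by
      have heq : dlt r m' e = dlt r m e - gf e := by
        unfold dlt; rw [hmz]; ring
      rw [heq, hgfe]
      have : (0:ℤ) ≤ (B.card : ℤ) := Int.natCast_nonneg _
      omega
    exact Finset.sum_lt_sum (fun p _ => hptle p) ⟨e, Finset.mem_univ e, hstrict⟩

theorem exists_dominating (d : V × V → ℕ) (A : Set (V × V)) (din dout : V → ℕ)
    (r : V × V → ℕ) (hr : DegFeasible A din dout r)
    (hrmin : ∀ m : V × V → ℕ, DegFeasible A din dout m → mCost d r ≤ mCost d m)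
    (B : Finset (V × V)) :
    ∀ n (m : V × V → ℕ), DegFeasible A din dout m → (∀ p ∈ B, 1 ≤ m p) →
      (∑ p : V × V, (dlt r m p).natAbs) ≤ n →
      ∃ m', DegFeasible A din dout m' ∧ (∀ p ∈ B, 1 ≤ m' p) ∧
        mCost d m' ≤ mCost d m ∧
        (∀ p : V × V, r p ≤ m' p + B.card + 1) ∧ (∀ p ∈ B, r p ≤ m' p + B.card) := by
  intro n
  induction n with
  | zero =>
    intro m hm hB hmeas
    by_cases hdom : (∀ p : V × V, r p ≤ m p + B.card + 1) ∧ (∀ p ∈ B, r p ≤ m p + B.card)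
    · exact ⟨m, hm, hB, le_rfl, hdom.1, hdom.2⟩
    · exfalso
      have he : ∃ e : V × V, m e + B.card + 1 ≤ r e := by
        by_contra hcon
        push_neg at hcon
        exact hdom ⟨fun p => by have := hcon p; omega,
          fun p _ => by have := hcon p; omega⟩
      obtain ⟨e, he⟩ := he
      obtain ⟨m'', r'', _, _, _, _, hlt⟩ :=
        augment_step d A din dout r m B hr hm hB e he
      omega
  | succ n ih =>
    intro m hm hB hmeas
    by_cases hdom : (∀ p : V × V, r p ≤ m p + B.card + 1) ∧ (∀ p ∈ B, r p ≤ m p + B.card)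
    · exact ⟨m, hm, hB, le_rfl, hdom.1, hdom.2⟩
    · have he : ∃ e : V × V, m e + B.card + 1 ≤ r e := by
        by_contra hcon
        push_neg at hcon
        exact hdom ⟨fun p => by have := hcon p; omega,
          fun p _ => by have := hcon p; omega⟩
      obtain ⟨e, he⟩ := he
      obtain ⟨m'', r'', hm''f, hr''f, hB'', hcost'', hlt⟩ :=
        augment_step d A din dout r m B hr hm hB e he
      have hcostle : mCost d m'' ≤ mCost d m := by
        have := hrmin r'' hr''f
        omega
      obtain ⟨m', h1, h2, h3, h4, h5⟩ := ih m'' hm''f hB'' (by omega)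
      exact ⟨m', h1, h2, le_trans h3 hcostle, h4, h5⟩

theorem mCost_add (d a b : V × V → ℕ) :
    mCost d (fun p => a p + b p) = mCost d a + mCost d b := by
  unfold mCost
  rw [← Finset.sum_add_distrib]
  exact Finset.sum_congr rfl (fun p _ => by ring)


/-- **correctness of the kernelization.**
Let `r` be a minimum-cost degree-feasible multiplicity function (for demands `din`, `dout`
and allowed edges `A`), and suppose some degree-feasible multiplicity function contains a
member of `F`. Set `f(u,v) = max(r(u,v) − s(F) − 1, 0)`, `din'(v) = din(v) − ∑_w f(w,v)`,
`dout'(v) = dout(v) − ∑_w f(v,w)`. Then for every `m*` that is degree-feasible for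
`(din', dout')` with allowed edges `A`, contains a member of `F`, and has minimum cost among
all such, the function `f + m*` is degree-feasible for `(din, dout)`, contains a member of
`F`, and has minimum cost among all degree-feasible functions for `(din, dout)` containing a
member of `F`. -/
theorem kernelization_correct
    (d : V × V → ℕ) (A : Set (V × V)) (din dout : V → ℕ)
    (F : Finset (Finset (V × V))) (r : V × V → ℕ)
    (hr : DegFeasible A din dout r)
    (hrmin : ∀ m : V × V → ℕ, DegFeasible A din dout m → mCost d r ≤ mCost d m)
    (hex : ∃ m : V × V → ℕ, DegFeasible A din dout m ∧ ContainsMember F m)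
    (f : V × V → ℕ) (hf : ∀ p : V × V, f p = r p - (F.sup Finset.card + 1))
    (din' dout' : V → ℕ)
    (hdin' : ∀ v : V, din' v = din v - ∑ w : V, f (w, v))
    (hdout' : ∀ v : V, dout' v = dout v - ∑ w : V, f (v, w))
    (mstar : V × V → ℕ)
    (hm : DegFeasible A din' dout' mstar)
    (hmc : ContainsMember F mstar)
    (hmmin : ∀ m : V × V → ℕ, DegFeasible A din' dout' m → ContainsMember F m →
      mCost d mstar ≤ mCost d m) :
    DegFeasible A din dout (fun p => f p + mstar p) ∧
    ContainsMember F (fun p => f p + mstar p) ∧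
    (∀ m : V × V → ℕ, DegFeasible A din dout m → ContainsMember F m →
      mCost d (fun p => f p + mstar p) ≤ mCost d m) := by
  set s : ℕ := F.sup Finset.card with hs
  have hfle : ∀ p, f p ≤ r p := fun p => by rw [hf p]; omega
  have hrowf : ∀ v, ∑ w : V, f (v, w) ≤ dout v := by
    intro v
    calc ∑ w : V, f (v, w) ≤ ∑ w : V, r (v, w) :=
          Finset.sum_le_sum (fun w _ => hfle (v, w))
      _ = dout v := hr.2.1 v
  have hcolf : ∀ v, ∑ w : V, f (w, v) ≤ din v := by
    intro v
    calc ∑ w : V, f (w, v) ≤ ∑ w : V, r (w, v) :=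
          Finset.sum_le_sum (fun w _ => hfle (w, v))
      _ = din v := hr.2.2 v
  have hfeas : DegFeasible A din dout (fun p => f p + mstar p) := by
    refine ⟨?_, ?_, ?_⟩
    · intro p hp
      have h1 : r p = 0 := hr.1 p hp
      have h2 : mstar p = 0 := hm.1 p hp
      have h3 : f p = 0 := by rw [hf p, h1]; simp
      simp [h2, h3]
    · intro v
      rw [Finset.sum_add_distrib, hm.2.1 v, hdout' v]
      have := hrowf v
      omega
    · intro v
      rw [Finset.sum_add_distrib, hm.2.2 v, hdin' v]
      have := hcolf v
      omega
  refine ⟨hfeas, ?_, ?_⟩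
  · obtain ⟨B, hBF, hBm⟩ := hmc
    refine ⟨B, hBF, fun p hp => ?_⟩
    show 1 ≤ f p + mstar p
    exact le_trans (hBm p hp) (Nat.le_add_left _ _)
  · intro m hmf hmcm
    obtain ⟨B, hBF, hBm⟩ := hmcm
    have hBcard : B.card ≤ s := Finset.le_sup hBF
    obtain ⟨m', hm'f, hm'B, hm'cost, hdom1, hdom2⟩ :=
      exists_dominating d A din dout r hr hrmin B
        (∑ p : V × V, (dlt r m p).natAbs) m hmf hBm le_rfl
    have hfm' : ∀ p, f p ≤ m' p := by
      intro p
      have := hdom1 p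
      rw [hf p]
      omega
    set g : V × V → ℕ := fun p => m' p - f p with hg
    have hfg : ∀ p, f p + g p = m' p := by
      intro p
      simp only [hg]
      have := hfm' p
      omega
    have hgfeas : DegFeasible A din' dout' g := by
      refine ⟨?_, ?_, ?_⟩
      · intro p hp
        have h1 : m' p = 0 := hm'f.1 p hp
        simp [hg, h1]
      · intro v
        have hsum : ∑ w : V, f (v, w) + ∑ w : V, g (v, w) = dout v := by
          rw [← Finset.sum_add_distrib]
          rw [Finset.sum_congr rfl (fun w _ => hfg (v, w))]
          exact hm'f.2.1 v
        rw [hdout' v]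
        have := hrowf v
        omega
      · intro v
        have hsum : ∑ w : V, f (w, v) + ∑ w : V, g (w, v) = din v := by
          rw [← Finset.sum_add_distrib]
          rw [Finset.sum_congr rfl (fun w _ => hfg (w, v))]
          exact hm'f.2.2 v
        rw [hdin' v]
        have := hcolf v
        omega
    have hgB : ContainsMember F g := by
      refine ⟨B, hBF, ?_⟩
      intro p hp
      have h1 := hdom2 p hp
      have h2 := hm'B p hp
      have h3 := hf p
      simp only [hg]
      omega
    have hkey : mCost d mstar ≤ mCost d g := hmmin g hgfeas hgB
    have heq : mCost d (fun p => f p + g p) = mCost d m' := by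
      refine congrArg (mCost d) ?_
      funext p
      exact hfg p
    calc mCost d (fun p => f p + mstar p)
        = mCost d f + mCost d mstar := mCost_add d f mstar
      _ ≤ mCost d f + mCost d g := by omega
      _ = mCost d (fun p => f p + g p) := (mCost_add d f g).symm
      _ = mCost d m' := heq
      _ ≤ mCost d m := hm'cost
end

section
/- Let V be a nonempty finite set, let k : V → ℕ satisfy k(v) ≥ 1 for all v, let d : V × V → ℕ, let ℓ = ∑_{v∈V} k(v), and let c ∈ ℕ. Then there exists a cyclic sequence x : ℤ/ℓℤ → V in which every v ∈ V appears exactly k(v) times and ∑_{i∈ℤ/ℓℤ} d(x(i), x(i+1)) = c, if and only if there exists a multiplicity function m : V × V → ℕ such that for every v ∈ V, ∑_{w} m(v,w) = ∑_{w} m(w,v) = k(v), the undirected support graph of m is connected on all of V, and ∑_{(u,v)} d(u,v)·m(u,v) = c. -/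
variable {V : Type*} [Fintype V] [DecidableEq V]

/-- The undirected support graph of a multiplicity function `m` : distinct `u`, `v` are
adjacent iff `m (u,v) + m (v,u) ≥ 1`. -/
def supportGraph (m : V × V → ℕ) : SimpleGraph V where
  Adj u v := u ≠ v ∧ 1 ≤ m (u, v) + m (v, u)
  symm := by
    constructor
    intro u v h
    exact ⟨h.1.symm, by omega⟩
  loopless := by
    constructor
    intro v h
    exact h.1 rfl

/-!
A cyclic sequence `x` of length `n` is a closed walk, and its multiplicity function
`cyclicMult n x` counts the arcs `(x i, x (i + 1))` taken; its out- and in-degree at `v` both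
count the visits of `v`, its cost is additive over arcs, and its support is connected on the
visited vertices. This gives the forward direction.

The converse is the directed Euler theorem. A balanced `m` with an arc out of `u` has a cycle
below it: choose an out-arc at every vertex with positive out-degree; balance keeps the orbit
of any such vertex in that set, and a periodic point of the orbit gives a simple cycle.
Removing cycles that miss `u` keeps `m` balanced and the arcs at `u` intact, so eventually a
cycle through `u` appears. Finally, a closed walk below `m` that is not all of `m` can be
enlarged: by connectivity some vertex on it still has an unused out-arc, and a closed walk
through that vertex in the unused part is spliced in.
-/

open Finset

theorem sum_range_succ_mod {M : Type*} [AddCommMonoid M] (g : ℕ → M) (n : ℕ) :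
    ∑ i ∈ range n, g ((i + 1) % n) = ∑ i ∈ range n, g i := by
  rcases n with _ | n
  · rfl
  rw [sum_range_succ, sum_range_succ', Nat.mod_self]
  congr 1
  exact sum_congr rfl fun i hi => by rw [Nat.mod_eq_of_lt (by simpa using hi)]

theorem sum_range_add_mod {M : Type*} [AddCommMonoid M] (g : ℕ → M) (n s : ℕ) :
    ∑ i ∈ range n, g ((i + s) % n) = ∑ i ∈ range n, g i := by
  induction s with
  | zero => exact sum_congr rfl fun i hi => by rw [add_zero, Nat.mod_eq_of_lt (mem_range.1 hi)]
  | succ s ih =>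
    rw [← ih, ← sum_range_succ_mod (fun j => g ((j + s) % n))]
    simp only [Nat.mod_add_mod, Nat.add_right_comm _ 1 s, add_assoc]

theorem SimpleGraph.Preconnected.mem_of_adj_closed {α : Type*} {G : SimpleGraph α}
    (hG : G.Preconnected) {T : Set α} {u : α} (hu : u ∈ T)
    (hT : ∀ a b, G.Adj a b → a ∈ T → b ∈ T) (v : α) : v ∈ T := by
  by_contra hv
  obtain ⟨d, -, hd₁, hd₂⟩ := (hG u v).some.exists_boundary_dart T hu hv
  exact hd₂ (hT _ _ d.adj hd₁)

theorem reachable_supportGraph_of_pos {α : Type*} {m : α × α → ℕ} {a b : α} (h : 0 < m (a, b)) :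
    (supportGraph m).Reachable a b := by
  by_cases hab : a = b
  · exact hab ▸ .rfl
  · exact SimpleGraph.Adj.reachable ⟨hab, by omega⟩

section CyclicSequence

variable {α : Type*}

def cyclicEdge (n : ℕ) (x : ℕ → α) (i : ℕ) : α × α := (x i, x ((i + 1) % n))

variable [DecidableEq α]

def cyclicMult (n : ℕ) (x : ℕ → α) (p : α × α) : ℕ := #{i ∈ range n | cyclicEdge n x i = p}

theorem cyclicMult_rotate (n s : ℕ) (x : ℕ → α) :
    cyclicMult n (fun i => x ((i + s) % n)) = cyclicMult n x := by
  funext p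
  have hedge : ∀ i, cyclicEdge n (fun i => x ((i + s) % n)) i = cyclicEdge n x ((i + s) % n) := by
    intro i
    simp only [cyclicEdge, Nat.mod_add_mod, Nat.add_right_comm i 1 s]
  simp only [cyclicMult, card_filter, hedge]
  exact sum_range_add_mod (fun i => if cyclicEdge n x i = p then 1 else 0) n s

theorem sum_cyclicMult_smul [Fintype α] {M : Type*} [AddCommMonoid M] (n : ℕ) (x : ℕ → α)
    (f : α × α → M) : ∑ p, cyclicMult n x p • f p = ∑ i ∈ range n, f (cyclicEdge n x i) := by
  rw [← sum_fiberwise (range n) (cyclicEdge n x)]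
  refine sum_congr rfl fun p _ => ?_
  rw [sum_congr rfl fun i hi => congrArg f (mem_filter.1 hi).2, sum_const]
  rfl

theorem sum_cyclicMult [Fintype α] (n : ℕ) (x : ℕ → α) : ∑ p, cyclicMult n x p = n := by
  simpa using sum_cyclicMult_smul n x (fun _ => (1 : ℕ))

theorem sum_cyclicMult_fst [Fintype α] (n : ℕ) (x : ℕ → α) (v : α) :
    ∑ w, cyclicMult n x (v, w) = #{i ∈ range n | x i = v} := by
  rw [card_eq_sum_card_fiberwise (f := fun i => x ((i + 1) % n)) (t := univ) (by simp)]
  simp only [cyclicMult, filter_filter, cyclicEdge, Prod.ext_iff]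

theorem sum_cyclicMult_snd [Fintype α] (n : ℕ) (x : ℕ → α) (v : α) :
    ∑ w, cyclicMult n x (w, v) = #{i ∈ range n | x i = v} := by
  rw [card_filter, ← sum_range_succ_mod, ← card_filter,
    card_eq_sum_card_fiberwise (f := x) (t := univ) (by simp)]
  simp only [cyclicMult, filter_filter, cyclicEdge, Prod.ext_iff, and_comm]

theorem cyclicMult_append {n n' : ℕ} {x y : ℕ → α} (h : x 0 = y 0) :
    cyclicMult (n + n') (fun i => if i < n then x i else y (i - n)) =
      cyclicMult n x + cyclicMult n' y := by
  set z : ℕ → α := fun i => if i < n then x i else y (i - n)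
  have hz0 : z 0 = y 0 := by by_cases hn : 0 < n <;> simp [z, hn, h]
  have left : ∀ i < n, cyclicEdge (n + n') z i = cyclicEdge n x i := by
    intro i hi
    simp only [cyclicEdge, z, if_pos hi, Prod.mk.injEq, true_and]
    rcases Nat.lt_or_ge (i + 1) n with hi' | hi'
    · rw [Nat.mod_eq_of_lt hi', Nat.mod_eq_of_lt (by omega), if_pos hi']
    · obtain rfl : i + 1 = n := by omega
      rcases n'.eq_zero_or_pos with rfl | hn'
      · simp [h]
      · rw [Nat.mod_self, Nat.mod_eq_of_lt (by omega)]
        simp [h]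
  have right : ∀ i < n', cyclicEdge (n + n') z (n + i) = cyclicEdge n' y i := by
    intro i hi
    simp only [cyclicEdge, z, Prod.mk.injEq]
    refine ⟨by simp, ?_⟩
    rcases Nat.lt_or_ge (i + 1) n' with hi' | hi'
    · rw [Nat.mod_eq_of_lt hi', Nat.mod_eq_of_lt (by omega), if_neg (by omega)]
      congr 1; omega
    · obtain rfl : i + 1 = n' := by omega
      rw [← add_assoc, Nat.mod_self, Nat.mod_self]
      exact hz0
  funext p
  simp only [cyclicMult, card_filter, sum_range_add, Pi.add_apply]
  congr 1
  · exact sum_congr rfl fun i hi => by rw [left i (mem_range.1 hi)]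
  · exact sum_congr rfl fun i hi => by rw [right i (mem_range.1 hi)]

theorem exists_of_cyclicMult_pos {n : ℕ} {x : ℕ → α} {p : α × α} (hp : 0 < cyclicMult n x p) :
    (∃ i < n, x i = p.1) ∧ ∃ i < n, x i = p.2 := by
  obtain ⟨i, hi⟩ := card_pos.1 hp
  obtain ⟨hin, rfl⟩ := mem_filter.1 hi
  rw [mem_range] at hin
  exact ⟨⟨i, hin, rfl⟩, _, Nat.mod_lt _ (by omega), rfl⟩

theorem cyclicMult_le_one {n : ℕ} {x : ℕ → α} (hx : Set.InjOn x (Set.Iio n)) (p : α × α) :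
    cyclicMult n x p ≤ 1 := by
  unfold cyclicMult
  refine card_le_one.2 fun i hi j hj => hx ?_ ?_ ?_
  · exact mem_range.1 (mem_filter.1 hi).1
  · exact mem_range.1 (mem_filter.1 hj).1
  · exact (Prod.mk.inj ((mem_filter.1 hi).2.trans (mem_filter.1 hj).2.symm)).1

theorem reachable_supportGraph_cyclicMult {n i : ℕ} {x : ℕ → α} (hi : i < n) :
    (supportGraph (cyclicMult n x)).Reachable (x 0) (x i) := by
  induction i with
  | zero => rfl
  | succ i ih =>
    refine (ih (by omega)).trans (reachable_supportGraph_of_pos (card_pos.2 ⟨i, ?_⟩))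
    exact mem_filter.2 ⟨mem_range.2 (by omega), by simp [cyclicEdge, Nat.mod_eq_of_lt hi]⟩

theorem connected_supportGraph_cyclicMult {n : ℕ} {x : ℕ → α} (hx : ∀ v, ∃ i < n, x i = v) :
    (supportGraph (cyclicMult n x)).Connected where
  preconnected u v := by
    obtain ⟨i, hi, rfl⟩ := hx u
    obtain ⟨j, hj, rfl⟩ := hx v
    exact (reachable_supportGraph_cyclicMult hi).symm.trans (reachable_supportGraph_cyclicMult hj)
  nonempty := ⟨x 0⟩

end CyclicSequence

section Balanced

variable {α : Type*} [Fintype α]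

def IsBalanced (m : α × α → ℕ) : Prop := ∀ v, ∑ w, m (v, w) = ∑ w, m (w, v)

theorem IsBalanced.tsub {m m' : α × α → ℕ} (hm : IsBalanced m) (hm' : IsBalanced m')
    (hle : m' ≤ m) : IsBalanced (m - m') := fun v => by
  simp only [Pi.sub_apply]
  rw [sum_tsub_distrib (f := fun w => m (v, w)) _ fun w _ => hle _,
    sum_tsub_distrib (f := fun w => m (w, v)) _ fun w _ => hle _, hm v, hm' v]

variable [DecidableEq α]

theorem isBalanced_cyclicMult (n : ℕ) (x : ℕ → α) : IsBalanced (cyclicMult n x) := fun v => by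
  rw [sum_cyclicMult_fst, sum_cyclicMult_snd]

theorem IsBalanced.exists_cyclicMult_le {m : α × α → ℕ} (hm : IsBalanced m) {p : α × α}
    (hp : 0 < m p) : ∃ n > 0, ∃ x : ℕ → α, cyclicMult n x ≤ m := by
  choose! s hs using fun v (h : ∃ w, 0 < m (v, w)) => h
  have hs_out : ∀ v, (∃ w, 0 < m (v, w)) → ∃ w, 0 < m (s v, w) := by
    intro v hv
    have hin : 0 < ∑ w, m (w, s v) := sum_pos_iff.2 ⟨v, mem_univ v, hs v hv⟩
    obtain ⟨w, -, hw⟩ := sum_pos_iff.1 (hm (s v) ▸ hin)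
    exact ⟨w, hw⟩
  have horbit : ∀ k, ∃ w, 0 < m (s^[k] p.1, w) := by
    intro k
    induction k with
    | zero => exact ⟨p.2, hp⟩
    | succ k ih => simpa only [Function.iterate_succ_apply'] using hs_out _ ih
  obtain ⟨a, b, hab, heq⟩ :=
    Set.finite_univ.exists_lt_map_eq_of_forall_mem (f := fun k => s^[k] p.1) fun _ => Set.mem_univ _
  have hper : Function.IsPeriodicPt s (b - a) (s^[a] p.1) := by
    rw [Function.IsPeriodicPt, Function.IsFixedPt, ← Function.iterate_add_apply,
      Nat.sub_add_cancel hab.le]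
    exact heq.symm
  set x₀ := s^[a] p.1
  refine ⟨_, hper.minimalPeriod_pos (by omega), fun k => s^[k] x₀, fun q => ?_⟩
  rcases Nat.eq_zero_or_pos (cyclicMult _ (fun k => s^[k] x₀) q) with h | h
  · exact h ▸ Nat.zero_le _
  refine (cyclicMult_le_one Function.iterate_injOn_Iio_minimalPeriod q).trans ?_
  obtain ⟨i, hi⟩ := card_pos.1 h
  obtain ⟨-, rfl⟩ := mem_filter.1 hi
  simp only [cyclicEdge, Function.iterate_mod_minimalPeriod_eq, Function.iterate_succ_apply']
  obtain ⟨w, hw⟩ := horbit (i + a)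
  exact hs _ ⟨w, by rwa [Function.iterate_add_apply] at hw⟩

theorem IsBalanced.exists_cyclicMult_le_through {m : α × α → ℕ} (hm : IsBalanced m) {u w : α}
    (huw : 0 < m (u, w)) : ∃ n > 0, ∃ x : ℕ → α, x 0 = u ∧ cyclicMult n x ≤ m := by
  induction hN : ∑ p, m p using Nat.strong_induction_on generalizing m with
  | _ N ih =>
  obtain ⟨n, hn, y, hy⟩ := hm.exists_cyclicMult_le huw
  by_cases hmem : ∃ s < n, y s = u
  · obtain ⟨s, hs, rfl⟩ := hmem
    refine ⟨n, hn, fun i => y ((i + s) % n), by simp [Nat.mod_eq_of_lt hs], ?_⟩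
    rwa [cyclicMult_rotate]
  have hyu : cyclicMult n y (u, w) = 0 := by
    by_contra h
    obtain ⟨⟨s, hs, hsu⟩, -⟩ := exists_of_cyclicMult_pos (Nat.pos_of_ne_zero h)
    exact hmem ⟨s, hs, hsu⟩
  have hlt : ∑ p, (m - cyclicMult n y) p < N := by
    have hle : n ≤ ∑ p, m p := sum_cyclicMult n y ▸ sum_le_sum fun p _ => hy p
    rw [← hN, Pi.sub_def, sum_tsub_distrib _ fun p _ => hy p, sum_cyclicMult]
    omega
  obtain ⟨n', hn', x, hx0, hx⟩ := ih _ hlt (hm.tsub (isBalanced_cyclicMult n y) hy)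
    (by simp [hyu, huw]) rfl
  exact ⟨n', hn', x, hx0, fun p => (hx p).trans (Nat.sub_le _ _)⟩

theorem exists_sum_tsub_cyclicMult_pos {m : α × α → ℕ} (hm : IsBalanced m)
    (hconn : (supportGraph m).Preconnected) {n : ℕ} (hn : 0 < n) {x : ℕ → α}
    (hx : cyclicMult n x ≤ m) (hne : cyclicMult n x ≠ m) :
    ∃ s < n, 0 < ∑ w, (m - cyclicMult n x) (x s, w) := by
  have hr : IsBalanced (m - cyclicMult n x) := hm.tsub (isBalanced_cyclicMult n x) hx
  by_contra! hzero
  have hout : ∀ s < n, ∀ w, m (x s, w) - cyclicMult n x (x s, w) = 0 := fun s hs w =>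
    sum_eq_zero_iff.1 (Nat.le_zero.1 (hzero s hs)) w (mem_univ w)
  have hin : ∀ s < n, ∀ w, m (w, x s) - cyclicMult n x (w, x s) = 0 := fun s hs w =>
    sum_eq_zero_iff.1 (hr (x s) ▸ Nat.le_zero.1 (hzero s hs)) w (mem_univ w)
  have hcover : ∀ v, v ∈ {v | ∃ s < n, x s = v} := by
    refine hconn.mem_of_adj_closed ⟨0, hn, rfl⟩ ?_
    rintro a b ⟨-, hab⟩ ⟨s, hs, rfl⟩
    by_contra hb
    have h₁ : cyclicMult n x (x s, b) = 0 := by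
      by_contra h
      exact hb (exists_of_cyclicMult_pos (Nat.pos_of_ne_zero h)).2
    have h₂ : cyclicMult n x (b, x s) = 0 := by
      by_contra h
      exact hb (exists_of_cyclicMult_pos (Nat.pos_of_ne_zero h)).1
    have h₃ := hout s hs b
    have h₄ := hin s hs b
    omega
  refine hne (funext fun ⟨a, b⟩ => ?_)
  obtain ⟨s, hs, rfl⟩ := hcover a
  have h₁ : m (x s, b) - cyclicMult n x (x s, b) = 0 := hout s hs b
  have h₂ : cyclicMult n x (x s, b) ≤ m (x s, b) := hx (x s, b)
  omega

theorem IsBalanced.exists_cyclicMult_eq_of_le {m : α × α → ℕ} (hm : IsBalanced m)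
    (hconn : (supportGraph m).Preconnected) {n : ℕ} (hn : 0 < n) {x : ℕ → α}
    (hx : cyclicMult n x ≤ m) : ∃ n' x', cyclicMult n' x' = m := by
  induction hN : ∑ p, m p - n using Nat.strong_induction_on generalizing n x with
  | _ N ih =>
  by_cases heq : cyclicMult n x = m
  · exact ⟨n, x, heq⟩
  obtain ⟨s, hs, hpos⟩ := exists_sum_tsub_cyclicMult_pos hm hconn hn hx heq
  obtain ⟨w, -, hw⟩ := sum_pos_iff.1 hpos
  obtain ⟨n', hn', y, hy0, hy⟩ :=
    (hm.tsub (isBalanced_cyclicMult n x) hx).exists_cyclicMult_le_through hw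
  set z : ℕ → α := fun i => if i < n then x ((i + s) % n) else y (i - n)
  have hz : cyclicMult (n + n') z = cyclicMult n x + cyclicMult n' y := by
    rw [cyclicMult_append (by simp [Nat.mod_eq_of_lt hs, hy0]), cyclicMult_rotate]
  have hle : cyclicMult (n + n') z ≤ m := fun p => by
    have hyp : cyclicMult n' y p ≤ m p - cyclicMult n x p := hy p
    have hxp : cyclicMult n x p ≤ m p := hx p
    show cyclicMult (n + n') z p ≤ m p
    rw [hz, Pi.add_apply]
    omega
  have htot : n + n' ≤ ∑ p, m p := sum_cyclicMult (n + n') z ▸ sum_le_sum fun p _ => hle p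
  exact ih _ (by omega) (by omega) hle rfl

theorem IsBalanced.exists_cyclicMult_eq {m : α × α → ℕ} (hm : IsBalanced m)
    (hconn : (supportGraph m).Connected) : ∃ n x, cyclicMult n x = m := by
  by_cases hzero : ∀ p, m p = 0
  · obtain ⟨v⟩ := hconn.nonempty
    exact ⟨0, fun _ => v, funext fun p => by simp [cyclicMult, hzero]⟩
  push Not at hzero
  obtain ⟨⟨u, w⟩, hp⟩ := hzero
  obtain ⟨n, hn, x, -, hx⟩ := hm.exists_cyclicMult_le_through (Nat.pos_of_ne_zero hp)
  exact hm.exists_cyclicMult_eq_of_le hconn.preconnected hn hx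

end Balanced

theorem tour_iff_connected_multiplicity_general
    (k : V → ℕ) (hk : ∀ v : V, 1 ≤ k v) (d : V × V → ℕ)
    (ℓ : ℕ) (hℓ : ℓ = ∑ v : V, k v) (c : ℕ) :
    (∃ x : ℕ → V,
      (∀ v : V, ((Finset.range ℓ).filter (fun i => x i = v)).card = k v) ∧
      ∑ i ∈ Finset.range ℓ, d (x i, x ((i + 1) % ℓ)) = c)
    ↔
    (∃ m : V × V → ℕ,
      (∀ v : V, ∑ w : V, m (v, w) = k v) ∧
      (∀ v : V, ∑ w : V, m (w, v) = k v) ∧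
      (supportGraph m).Connected ∧
      ∑ p : V × V, d p * m p = c) := by
  have hcost : ∀ n x, ∑ p, d p * cyclicMult n x p = ∑ i ∈ range n, d (x i, x ((i + 1) % n)) :=
    fun n x => by simpa only [smul_eq_mul, mul_comm, cyclicEdge] using sum_cyclicMult_smul n x d
  constructor
  · rintro ⟨x, hx, rfl⟩
    have hvisit : ∀ v, ∃ i < ℓ, x i = v := fun v => by
      obtain ⟨i, hi⟩ := card_pos.1 ((hx v).symm ▸ hk v)
      exact ⟨i, mem_range.1 (mem_filter.1 hi).1, (mem_filter.1 hi).2⟩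
    exact ⟨cyclicMult ℓ x, fun v => by rw [sum_cyclicMult_fst, hx],
      fun v => by rw [sum_cyclicMult_snd, hx], connected_supportGraph_cyclicMult hvisit, hcost ℓ x⟩
  · rintro ⟨m, hout, hin, hconn, rfl⟩
    obtain ⟨n, x, rfl⟩ := IsBalanced.exists_cyclicMult_eq (fun v => (hout v).trans (hin v).symm) hconn
    obtain rfl : n = ℓ := by
      rw [hℓ, ← sum_cyclicMult n x, Fintype.sum_prod_type]
      exact sum_congr rfl fun v _ => hout v
    exact ⟨x, fun v => by rw [← sum_cyclicMult_fst, hout], (hcost n x).symm⟩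

/-- For a nonempty finite set `V`, demands `k : V → ℕ` with `k v ≥ 1`,
costs `d : V × V → ℕ`, `ℓ = ∑ v, k v` and `c : ℕ`: there is a cyclic sequence of length `ℓ`
in which each `v` appears exactly `k v` times and whose total cost is `c`, iff there is a
multiplicity function `m` whose out- and in-degrees at each `v` equal `k v`, whose undirected
support graph is connected on all of `V`, and whose cost is `c`. -/
theorem tour_iff_connected_multiplicity
    [Nonempty V] (k : V → ℕ) (hk : ∀ v : V, 1 ≤ k v) (d : V × V → ℕ)
    (ℓ : ℕ) (hℓ : ℓ = ∑ v : V, k v) (c : ℕ) :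
    (∃ x : ℕ → V,
      (∀ v : V, ((Finset.range ℓ).filter (fun i => x i = v)).card = k v) ∧
      ∑ i ∈ Finset.range ℓ, d (x i, x ((i + 1) % ℓ)) = c)
    ↔
    (∃ m : V × V → ℕ,
      (∀ v : V, ∑ w : V, m (v, w) = k v) ∧
      (∀ v : V, ∑ w : V, m (w, v) = k v) ∧
      (supportGraph m).Connected ∧
      ∑ p : V × V, d p * m p = c) :=
  tour_iff_connected_multiplicity_general k hk d ℓ hℓ c
end

section
/- Let V be a finite set, E ⊆ V × V, in, out : V → ℕ, let B be the associated bipartite graph with sides O and I, fix v* ∈ V, and let K be a field of characteristic 2. In the multivariate polynomial ring over K with one variable x_{(o,i)} for each pair (o,i) ∈ O × I, the following identity holds: ∑_{X ⊆ V, v* ∈ X} P_X · P_{V∖X} = ∑_{M} ∏_{o∈O} x_{(o, M(o))}, where the right-hand sum ranges over all connected perfect matchings M of B, and for Y ⊆ V, P_Y = ∑_{M} ∏_{o ∈ O_Y} x_{(o, M(o))} with the sum ranging over all perfect matchings M of B[Y]. -/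
variable {V : Type*} [Fintype V] [DecidableEq V]

/-- The left side `O` of the bipartite graph `B`: pairs `(v, i)` with `1 ≤ i ≤ dout v`. -/
abbrev OSide (dout : V → ℕ) := Σ v : V, Fin (dout v)

/-- The right side `I` of the bipartite graph `B`: pairs `(v, j)` with `1 ≤ j ≤ din v`. -/
abbrev ISide (din : V → ℕ) := Σ v : V, Fin (din v)

/-- A perfect matching of the bipartite graph `B`: a bijection from `O` to `I` such that
every matched pair projects to an edge of `E`. -/
def IsPerfectMatching (E : Set (V × V)) (din dout : V → ℕ)
    (M : OSide dout ≃ ISide din) : Prop :=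
  ∀ o : OSide dout, (o.1, (M o).1) ∈ E

/-- The simple graph on `V` induced by a matching `M`: distinct `u`, `v` are adjacent iff
some `o` satisfies `{π_O(o), π_I(M(o))} = {u, v}`. -/
def matchingGraph (din dout : V → ℕ)
    (M : OSide dout ≃ ISide din) : SimpleGraph V where
  Adj u v := u ≠ v ∧ ∃ o : OSide dout,
    (o.1 = u ∧ (M o).1 = v) ∨ (o.1 = v ∧ (M o).1 = u)
  symm := by
    constructor
    intro u v h
    obtain ⟨huv, o, ho⟩ := h
    exact ⟨huv.symm, o, ho.symm⟩
  loopless := by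
    constructor
    intro v h
    exact h.1 rfl

/-- For `Y ⊆ V`, the polynomial `P_Y = ∑_{M ∈ PM(B[Y])} ∏_{o ∈ O_Y} x_{(o, M(o))}`, where the
sum ranges over all perfect matchings of the induced bipartite graph `B[Y]`. -/
noncomputable def inducedMatchingPoly (E : Set (V × V)) (din dout : V → ℕ)
    (K : Type*) [Field K] (Y : Finset V) :
    MvPolynomial (OSide dout × ISide din) K :=
  ∑ᶠ M ∈ {M : {o : OSide dout // o.1 ∈ Y} ≃ {i : ISide din // i.1 ∈ Y} |
        ∀ o : {o : OSide dout // o.1 ∈ Y}, ((o : OSide dout).1, ((M o : ISide din)).1) ∈ E},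
    ∏ o : {o : OSide dout // o.1 ∈ Y},
      MvPolynomial.X ((o : OSide dout), ((M o) : ISide din))

/-!
Cutting a perfect matching `M` of `B` along a set `X` that `M` maps onto itself gives a bijection
between such `M` and pairs of perfect matchings of `B[X]` and `B[V ∖ X]`, and the monomials
multiply. So the left-hand side counts every perfect matching `M` once for each `X ∋ v*` that is a
union of components of the graph of `M`. If that graph is connected only `X = V` qualifies;
otherwise toggling the vertices outside the component of `v*` pairs these sets off, and in
characteristic 2 the pairs cancel.
-/

open Finset

namespace Equiv

variable {α β : Type*} (p : α → Prop) (q : β → Prop) [DecidablePred p] [DecidablePred q]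

@[simps]
def subtypePreservingEquivProd :
    {e : α ≃ β // ∀ a, p a ↔ q (e a)} ≃
      ({a // p a} ≃ {b // q b}) × ({a // ¬p a} ≃ {b // ¬q b}) where
  toFun e := (e.1.subtypeEquiv e.2, e.1.subtypeEquiv fun a => not_congr (e.2 a))
  invFun e := ⟨(sumCompl p).symm.trans ((sumCongr e.1 e.2).trans (sumCompl q)), fun a => by
    by_cases h : p a
    · simp [sumCompl_symm_apply_of_pos h, h, (e.1 _).2]
    · simp [sumCompl_symm_apply_of_neg h, h, (e.2 _).2]⟩
  left_inv e := by
    ext a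
    by_cases h : p a <;> simp [sumCompl_symm_apply_of_pos, sumCompl_symm_apply_of_neg, h]
  right_inv e := by
    ext <;> simp

end Equiv

namespace SimpleGraph

variable (G : SimpleGraph V)

theorem Reachable.iff_of_forall_adj {W : Type*} {G : SimpleGraph W} {P : W → Prop}
    (hP : ∀ u w, G.Adj u w → (P u ↔ P w)) {u w : W} (h : G.Reachable u w) : P u ↔ P w := by
  obtain ⟨p⟩ := h
  induction p with
  | nil => rfl
  | cons ha _ ih => exact (hP _ _ ha).trans ih

open scoped Classical in
theorem filter_adj_closed_eq_singleton_univ (hG : G.Connected) (v : V) :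
    ({X | v ∈ X ∧ ∀ u w, G.Adj u w → (u ∈ X ↔ w ∈ X)} : Finset (Finset V)) =
      {univ} := by
  ext X
  simp only [mem_filter_univ, mem_singleton]
  constructor
  · rintro ⟨hv, hX⟩
    exact eq_univ_of_forall fun w => ((hG.preconnected v w).iff_of_forall_adj hX).1 hv
  · rintro rfl
    simp

open scoped Classical in
theorem even_card_filter_adj_closed (hG : ¬G.Connected) (v : V) :
    Even #({X | v ∈ X ∧ ∀ u w, G.Adj u w → (u ∈ X ↔ w ∈ X)} : Finset (Finset V)) := by
  set D : Finset V := {w | ¬G.Reachable v w}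
  have hvD : v ∉ D := by simp [D]
  have hD : D ≠ ∅ := by
    obtain ⟨w, hw⟩ : ∃ w, ¬G.Reachable v w := by
      by_contra! h
      exact hG ((connected_iff_exists_forall_reachable G).2 ⟨v, h⟩)
    exact ne_empty_of_mem (s := D) (a := w) (by simpa [D])
  have hD_closed : ∀ u w, G.Adj u w → (u ∈ D ↔ w ∈ D) := fun u w huw => by
    simp only [D, mem_filter_univ]
    exact not_congr ⟨fun h => h.trans huw.reachable, fun h => h.trans huw.symm.reachable⟩
  -- `X ↦ X ∆ D` is a fixed-point-free involution of the sets counted.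
  rw [← ZMod.natCast_eq_zero_iff_even, card_eq_sum_ones, Nat.cast_sum]
  refine sum_involution (fun X _ => symmDiff X D) (fun _ _ => by decide) (fun X _ _ => ?_)
    (fun X hX => ?_) (fun X _ => symmDiff_symmDiff_cancel_right D X)
  · exact fun h => hD (symmDiff_eq_left.1 h)
  · simp only [mem_filter_univ] at hX ⊢
    refine ⟨mem_symmDiff.2 (Or.inl ⟨hX.1, hvD⟩), fun u w huw => ?_⟩
    simp only [mem_symmDiff, hX.2 u w huw, hD_closed u w huw]

end SimpleGraph

section Matchings

variable (E : Set (V × V)) (din dout : V → ℕ) (R : Type*) [CommSemiring R]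

/-- `inducedMatchingPoly` for a vertex predicate, so that `Yᶜ` can be read as `¬(· ∈ Y)`. -/
noncomputable def matchingPoly (s : V → Prop) [DecidablePred s] :
    MvPolynomial (OSide dout × ISide din) R :=
  ∑ᶠ M ∈ {M : {o : OSide dout // s o.1} ≃ {i : ISide din // s i.1} |
        ∀ o : {o : OSide dout // s o.1}, ((o : OSide dout).1, ((M o : ISide din)).1) ∈ E},
    ∏ o : {o : OSide dout // s o.1}, MvPolynomial.X ((o : OSide dout), ((M o) : ISide din))

theorem inducedMatchingPoly_eq_matchingPoly (K : Type*) [Field K] (Y : Finset V) :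
    inducedMatchingPoly E din dout K Y = matchingPoly E din dout K (· ∈ Y) :=
  rfl

open scoped Classical in
theorem matchingPoly_eq_sum (s : V → Prop) [DecidablePred s] :
    matchingPoly E din dout R s =
      ∑ M : {o : OSide dout // s o.1} ≃ {i : ISide din // s i.1},
        if ∀ o : {o : OSide dout // s o.1}, ((o : OSide dout).1, ((M o : ISide din)).1) ∈ E then
          ∏ o : {o : OSide dout // s o.1}, MvPolynomial.X ((o : OSide dout), ((M o) : ISide din))
        else 0 := by
  rw [matchingPoly, finsum_mem_eq_toFinset_sum, Set.toFinset_ofPred, sum_filter]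

open scoped Classical in
theorem matchingPoly_mul_matchingPoly_not (s : V → Prop) [DecidablePred s] :
    matchingPoly E din dout R s * matchingPoly E din dout R (¬s ·) =
      ∑ M : OSide dout ≃ ISide din,
        if (∀ o : OSide dout, s o.1 ↔ s (M o).1) ∧ IsPerfectMatching E din dout M then
          ∏ o : OSide dout, MvPolynomial.X (o, M o)
        else 0 := by
  rw [matchingPoly_eq_sum, matchingPoly_eq_sum, Fintype.sum_mul_sum, ← Fintype.sum_prod_type',
    ← (Equiv.subtypePreservingEquivProd _ _).sum_comp]
  simp only [ite_and]
  rw [← sum_filter, sum_subtype _ fun _ => mem_filter_univ _]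
  refine Fintype.sum_congr _ _ fun M => ?_
  have forall_split (P : OSide dout → Prop) :
      ((∀ o : {o : OSide dout // s o.1}, P o) ∧ ∀ o : {o : OSide dout // ¬s o.1}, P o) ↔
        ∀ o, P o :=
    ⟨fun h o => if ho : s o.1 then h.1 ⟨o, ho⟩ else h.2 ⟨o, ho⟩,
      fun h => ⟨fun o => h o, fun o => h o⟩⟩
  simp only [ite_zero_mul_ite_zero, Equiv.subtypePreservingEquivProd_apply,
    Equiv.subtypeEquiv_apply]
  exact if_congr (forall_split fun o => (o.1, (M.1 o).1) ∈ E)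
    (Fintype.prod_subtype_mul_prod_subtype _ fun o => MvPolynomial.X (o, M.1 o)) rfl

open scoped Classical in
theorem inducedMatchingPoly_mul_compl (K : Type*) [Field K] (X : Finset V) :
    inducedMatchingPoly E din dout K X * inducedMatchingPoly E din dout K Xᶜ =
      ∑ M : OSide dout ≃ ISide din,
        if (∀ o : OSide dout, o.1 ∈ X ↔ (M o).1 ∈ X) ∧ IsPerfectMatching E din dout M then
          ∏ o : OSide dout, MvPolynomial.X (o, M o)
        else 0 := by
  rw [inducedMatchingPoly_eq_matchingPoly, inducedMatchingPoly_eq_matchingPoly,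
    ← matchingPoly_mul_matchingPoly_not]
  congr! with v
  exact mem_compl

end Matchings

theorem matchingGraph_adj_closed_iff {W : Type*} {din dout : W → ℕ}
    (M : OSide dout ≃ ISide din) (P : W → Prop) :
    (∀ u w, (matchingGraph din dout M).Adj u w → (P u ↔ P w)) ↔
      ∀ o, P o.1 ↔ P (M o).1 := by
  refine ⟨fun h o => ?_, ?_⟩
  · by_cases he : o.1 = (M o).1
    · rw [he]
    · exact h _ _ ⟨he, o, .inl ⟨rfl, rfl⟩⟩
  · rintro h u w ⟨-, o, ⟨rfl, rfl⟩ | ⟨rfl, rfl⟩⟩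
    exacts [h o, (h o).symm]

open scoped Classical in
theorem sum_ite_preserved_eq_ite_connected {din dout : V → ℕ} (M : OSide dout ≃ ISide din)
    (v : V) {R : Type*} [Semiring R] [CharP R 2] (r : R) :
    ∑ X ∈ univ.filter (fun X : Finset V => v ∈ X),
        (if ∀ o : OSide dout, o.1 ∈ X ↔ (M o).1 ∈ X then r else 0) =
      if (matchingGraph din dout M).Connected then r else 0 := by
  rw [← sum_filter, filter_filter, sum_const]
  simp only [← matchingGraph_adj_closed_iff M]
  split_ifs with hG
  · rw [(matchingGraph din dout M).filter_adj_closed_eq_singleton_univ hG v, card_singleton,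
      one_smul]
  · rw [nsmul_eq_mul, (CharP.cast_eq_zero_iff R 2 _).2
      ((matchingGraph din dout M).even_card_filter_adj_closed hG v).two_dvd, zero_mul]

/-- Over a field of characteristic 2,
`∑_{X ⊆ V, v* ∈ X} P_X · P_{V∖X}` equals the generating polynomial of connected perfect
matchings `∑_{M connected PM} ∏_{o ∈ O} x_{(o, M(o))}`. -/
theorem cut_and_count_identity
    (E : Set (V × V)) (din dout : V → ℕ) (vstar : V)
    (K : Type*) [Field K] [CharP K 2] :
    ∑ X ∈ Finset.univ.filter (fun X : Finset V => vstar ∈ X),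
        inducedMatchingPoly E din dout K X * inducedMatchingPoly E din dout K Xᶜ
    =
    ∑ᶠ M ∈ {M : OSide dout ≃ ISide din |
        IsPerfectMatching E din dout M ∧ (matchingGraph din dout M).Connected},
      ∏ o : OSide dout, MvPolynomial.X (o, M o) := by
  classical
  conv_rhs => rw [finsum_mem_eq_toFinset_sum, Set.toFinset_ofPred, sum_filter]
  simp only [inducedMatchingPoly_mul_compl]
  rw [sum_comm]
  refine sum_congr rfl fun M _ => ?_
  simp only [ite_and]
  rw [sum_ite_preserved_eq_ite_connected]
  split_ifs <;> rfl
end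

section
/- Let T be a rooted tree on a finite set V with |V| = n ≥ 2 and root ρ, encoded by a parent function. Define its leaf layers by: R_0 = V; for i ≥ 1, L_i is the set of leaves of T restricted to R_{i−1} if |R_{i−1}| > 1 and L_i = ∅ otherwise, and R_i = R_{i−1} ∖ L_i. Then for every i ≥ 1: (a) ρ ∈ R_i and ρ ∉ L_{i+1}; (b) |L_i| ≥ |L_{i+1}|; and (c) i·|L_{i+1}| ≤ n − |R_i|. -/
variable {V : Type*} [Fintype V] [DecidableEq V]

/-- The leaves of the rooted tree (with parent function `p` and root `ρ`) restricted to `U`,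
if `|U| > 1`; the empty set otherwise. A leaf is a vertex of `U` that is the parent of no
non-root vertex of `U`. -/
def leafSet (p : V → V) (ρ : V) (U : Finset V) : Finset V :=
  if 1 < U.card then U.filter (fun v => ∀ u ∈ U, u ≠ ρ → p u ≠ v) else ∅

/-- `layerR p ρ i` is the set `R_i` of vertices remaining after `i` rounds of removing all
leaves: `R_0 = V` and `R_i = R_{i−1} ∖ L_i` where `L_i = leafSet p ρ R_{i−1}`. -/
def layerR (p : V → V) (ρ : V) : ℕ → Finset V
  | 0 => Finset.univ
  | i + 1 => layerR p ρ i \ leafSet p ρ (layerR p ρ i)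

lemma leafSet_subset (p : V → V) (ρ : V) (U : Finset V) : leafSet p ρ U ⊆ U := by
  unfold leafSet
  split
  · exact Finset.filter_subset _ _
  · exact Finset.empty_subset _

lemma iterate_mem {p : V → V} {U : Finset V} (hcl : ∀ v ∈ U, p v ∈ U) {v : V}
    (hv : v ∈ U) : ∀ k : ℕ, p^[k] v ∈ U := by
  intro k
  induction k with
  | zero => simpa using hv
  | succ k ih => rw [Function.iterate_succ_apply']; exact hcl _ ih

lemma root_child {p : V → V} {ρ : V} {U : Finset V}
    (hreach : ∀ v : V, ∃ k : ℕ, p^[k] v = ρ)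
    (hρ : ρ ∈ U) (hcl : ∀ v ∈ U, p v ∈ U) (hc : 1 < U.card) :
    ∃ w ∈ U, w ≠ ρ ∧ p w = ρ := by
  obtain ⟨u, hu, hne⟩ := Finset.exists_mem_ne hc ρ
  have hex : ∃ k, p^[k] u = ρ := hreach u
  have hk : p^[Nat.find hex] u = ρ := Nat.find_spec hex
  have hk0 : Nat.find hex ≠ 0 := by
    intro h; rw [h] at hk; simp at hk; exact hne hk
  refine ⟨p^[Nat.find hex - 1] u, iterate_mem hcl hu _, ?_, ?_⟩
  · exact Nat.find_min hex (by omega)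
  · have heq : Nat.find hex = (Nat.find hex - 1) + 1 := by omega
    rw [heq, Function.iterate_succ_apply'] at hk
    exact hk

lemma root_not_leaf {p : V → V} {ρ : V} {U : Finset V}
    (hreach : ∀ v : V, ∃ k : ℕ, p^[k] v = ρ)
    (hρ : ρ ∈ U) (hcl : ∀ v ∈ U, p v ∈ U) :
    ρ ∉ leafSet p ρ U := by
  unfold leafSet
  split
  · rename_i hc
    intro hmem
    obtain ⟨w, hw, hwne, hwp⟩ := root_child hreach hρ hcl hc
    exact (Finset.mem_filter.mp hmem).2 w hw hwne hwp
  · simp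

lemma layerR_good (p : V → V) (ρ : V) (hroot : p ρ = ρ)
    (hreach : ∀ v : V, ∃ k : ℕ, p^[k] v = ρ) :
    ∀ i : ℕ, ρ ∈ layerR p ρ i ∧ ∀ v ∈ layerR p ρ i, p v ∈ layerR p ρ i := by
  intro i
  induction i with
  | zero => exact ⟨Finset.mem_univ _, fun _ _ => Finset.mem_univ _⟩
  | succ i ih =>
    obtain ⟨hρ, hcl⟩ := ih
    have hρnl := root_not_leaf hreach hρ hcl
    constructor
    · exact Finset.mem_sdiff.mpr ⟨hρ, hρnl⟩
    · intro v hv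
      rw [layerR] at hv ⊢
      rw [Finset.mem_sdiff] at hv ⊢
      refine ⟨hcl v hv.1, ?_⟩
      intro hpl
      unfold leafSet at hpl
      by_cases hc : 1 < (layerR p ρ i).card
      · rw [if_pos hc] at hpl
        have h2 := (Finset.mem_filter.mp hpl).2
        by_cases hvρ : v = ρ
        · subst hvρ
          rw [hroot] at hpl
          exact hρnl (by unfold leafSet; rw [if_pos hc]; exact hpl)
        · exact h2 v hv.1 hvρ rfl
      · rw [if_neg hc] at hpl
        exact absurd hpl (Finset.notMem_empty _)

lemma leaf_card_mono (p : V → V) (ρ : V) (hroot : p ρ = ρ)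
    (hreach : ∀ v : V, ∃ k : ℕ, p^[k] v = ρ) (i : ℕ) :
    (leafSet p ρ (layerR p ρ (i + 1))).card ≤ (leafSet p ρ (layerR p ρ i)).card := by
  set U := layerR p ρ i with hU
  set L := leafSet p ρ U with hL
  set U' := layerR p ρ (i + 1) with hU'
  have hU'eq : U' = U \ L := rfl
  set L' := leafSet p ρ U' with hL'
  rcases Finset.eq_empty_or_nonempty L' with h | h
  · simp [h]
  have hcU' : 1 < U'.card := by
    by_contra hc
    rw [hL'] at h
    unfold leafSet at h
    rw [if_neg hc] at h
    exact Finset.not_nonempty_empty h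
  have hcU : 1 < U.card :=
    lt_of_lt_of_le hcU' (Finset.card_le_card (by rw [hU'eq]; exact Finset.sdiff_subset))
  have key : ∀ v ∈ L', ∃ u, u ∈ L ∧ p u = v ∧ u ≠ ρ := by
    intro v hv
    have hv' := hv
    rw [hL'] at hv'
    unfold leafSet at hv'
    rw [if_pos hcU'] at hv'
    obtain ⟨hvU', hleaf⟩ := Finset.mem_filter.mp hv'
    have hvU : v ∈ U ∧ v ∉ L := Finset.mem_sdiff.mp (hU'eq ▸ hvU')
    have hnl : ¬ (∀ u ∈ U, u ≠ ρ → p u ≠ v) := by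
      intro hall
      apply hvU.2
      rw [hL]
      unfold leafSet
      rw [if_pos hcU]
      exact Finset.mem_filter.mpr ⟨hvU.1, hall⟩
    push_neg at hnl
    obtain ⟨u, hu, hune, hpu⟩ := hnl
    have huU' : u ∉ U' := fun huU' => hleaf u huU' hune hpu
    refine ⟨u, ?_, hpu, hune⟩
    by_contra huL
    exact huU' (hU'eq ▸ Finset.mem_sdiff.mpr ⟨hu, huL⟩)
  classical
  have : L'.card ≤ L.card := by
    apply Finset.card_le_card_of_injOn
      (f := fun v => if h : ∃ u, u ∈ L ∧ p u = v ∧ u ≠ ρ then h.choose else v)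
    · intro v hv
      have hex := key v hv
      simp only [dif_pos hex]
      exact hex.choose_spec.1
    · intro v1 h1 v2 h2 heq
      have hex1 := key v1 h1
      have hex2 := key v2 h2
      simp only [dif_pos hex1, dif_pos hex2] at heq
      have e1 := hex1.choose_spec.2.1
      have e2 := hex2.choose_spec.2.1
      rw [← e1, ← e2, heq]
  exact this

lemma c_core (p : V → V) (ρ : V) (hroot : p ρ = ρ)
    (hreach : ∀ v : V, ∃ k : ℕ, p^[k] v = ρ) :
    ∀ i : ℕ, i * (leafSet p ρ (layerR p ρ i)).card ≤
      Fintype.card V - (layerR p ρ i).card := by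
  intro i
  induction i with
  | zero => simp
  | succ i ih =>
    have hb := leaf_card_mono p ρ hroot hreach i
    have hsub := leafSet_subset p ρ (layerR p ρ i)
    have hcardR : (layerR p ρ (i + 1)).card =
        (layerR p ρ i).card - (leafSet p ρ (layerR p ρ i)).card :=
      Finset.card_sdiff_of_subset hsub
    have hle : (layerR p ρ i).card ≤ Fintype.card V := Finset.card_le_univ _
    have hlL : (leafSet p ρ (layerR p ρ i)).card ≤ (layerR p ρ i).card :=
      Finset.card_le_card hsub
    have h1 : i * (leafSet p ρ (layerR p ρ (i + 1))).card ≤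
        i * (leafSet p ρ (layerR p ρ i)).card := Nat.mul_le_mul_left i hb
    have h2 : (i + 1) * (leafSet p ρ (layerR p ρ (i + 1))).card =
        i * (leafSet p ρ (layerR p ρ (i + 1))).card +
        (leafSet p ρ (layerR p ρ (i + 1))).card := by ring
    omega

/-- Let `T` be a rooted tree on a finite set `V` with `|V| = n ≥ 2` and root
`ρ`, encoded by a parent function `p`. With leaf layers `L_i = leafSet p ρ R_{i−1}` and
`R_i = R_{i−1} ∖ L_i`, for every `i ≥ 1`: (a) `ρ ∈ R_i` and `ρ ∉ L_{i+1}`;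
(b) `|L_i| ≥ |L_{i+1}|`; and (c) `i·|L_{i+1}| ≤ n − |R_i|`. -/
theorem leaf_layers_properties
    (p : V → V) (ρ : V) (hroot : p ρ = ρ)
    (hreach : ∀ v : V, ∃ k : ℕ, p^[k] v = ρ)
    (hcard : 2 ≤ Fintype.card V) :
    ∀ i : ℕ, 1 ≤ i →
      (ρ ∈ layerR p ρ i ∧ ρ ∉ leafSet p ρ (layerR p ρ i)) ∧
      (leafSet p ρ (layerR p ρ i)).card ≤ (leafSet p ρ (layerR p ρ (i - 1))).card ∧
      i * (leafSet p ρ (layerR p ρ i)).card ≤ Fintype.card V - (layerR p ρ i).card := by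
  intro i hi
  obtain ⟨hρ, hcl⟩ := layerR_good p ρ hroot hreach i
  refine ⟨⟨hρ, root_not_leaf hreach hρ hcl⟩, ?_, c_core p ρ hroot hreach i⟩
  obtain ⟨j, rfl⟩ : ∃ j, i = j + 1 := ⟨i - 1, by omega⟩
  simpa using leaf_card_mono p ρ hroot hreach j
end

section
/- Let n ≥ 1. The number of reachable states (S, δ) on V = {1, …, n} is at most n · C(2n−1, n), where C denotes the binomial coefficient. -/
/-!
A reachable state `(S, δ)` is determined by `δ` together with one vertex `b ∈ S` such that
`bad (S, δ) ⊆ {b}`. Indeed `δ` fixes `|S| = 1 + ∑ δ`; and if `(S, δ)`, `(S', δ)` share `b` but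
`S ≠ S'`, a vertex `v ∈ S ∖ S'` has `δ v = 0` and `v ≠ b`, so it is not bad, whence
`lastRmvd S < v ≤ lastRmvd S'`; a vertex of `S' ∖ S` gives the reverse inequality.
So there are at most `n` choices of `b`, and `δ` is a function on `V` with sum `k < n`; by stars
and bars and the hockey-stick identity there are `∑_{k<n} C(n+k-1, k) = C(2n-1, n)` of these.
-/

/-- `lastRmvd S = max ({0, 1, …, n} ∖ S)`. -/
def lastRmvd (n : ℕ) (S : Finset ℕ) : ℕ := ((Finset.range (n + 1)) \ S).sup id

/-- `bad (S, δ) = {v ∈ S : v < lastRmvd S ∧ δ v = 0}`. -/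
def badSet (n : ℕ) (S : Finset ℕ) (δ : ℕ → ℕ) : Finset ℕ :=
  S.filter (fun v => v < lastRmvd n S ∧ δ v = 0)

/-- A reachable state on `V = {1, …, n}`: a pair `(S, δ)` with `S ⊆ V`, `1 ∈ S`,
`δ v = 0` for `v ∉ S`, `δ 1 ≥ 1`, `∑_{v ∈ S} δ v = |S| − 1` and `|bad (S, δ)| ≤ 1`. -/
def ReachableState (n : ℕ) (S : Finset ℕ) (δ : ℕ → ℕ) : Prop :=
  S ⊆ Finset.Icc 1 n ∧ 1 ∈ S ∧ (∀ v : ℕ, v ∉ S → δ v = 0) ∧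
  1 ≤ δ 1 ∧ (∑ v ∈ S, δ v) = S.card - 1 ∧ (badSet n S δ).card ≤ 1

open Finset

lemma Finset.card_piAntidiag_nat {ι : Type*} [DecidableEq ι] (s : Finset ι) (k : ℕ) :
    #(s.piAntidiag k) = (#s + k - 1).choose k := by
  rw [← card_finsuppAntidiag_nat_eq_choose, finsuppAntidiag, card_map, card_attach]

lemma Finset.card_biUnion_range_piAntidiag_le {ι : Type*} [DecidableEq ι] [DecidableEq (ι → ℕ)]
    {s : Finset ι} (hs : s.Nonempty) (m : ℕ) :
    #((range (m + 1)).biUnion s.piAntidiag) ≤ (#s + m).choose m := by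
  obtain ⟨t, ht⟩ : ∃ t, #s = t + 1 := Nat.exists_eq_succ_of_ne_zero hs.card_pos.ne'
  calc #((range (m + 1)).biUnion s.piAntidiag)
      ≤ ∑ k ∈ range (m + 1), #(s.piAntidiag k) := card_biUnion_le
    _ = ∑ k ∈ range (m + 1), (k + t).choose t := by
      refine sum_congr rfl fun k _ => ?_
      rw [card_piAntidiag_nat, ht, show t + 1 + k - 1 = k + t by omega, Nat.choose_symm_add]
    _ = (#s + m).choose m := by
      rw [Nat.sum_range_add_choose, ht, ← Nat.choose_symm_add, add_comm (t + 1), ← add_assoc]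

lemma le_lastRmvd {n v : ℕ} {S : Finset ℕ} (hvn : v ≤ n) (hvS : v ∉ S) : v ≤ lastRmvd n S :=
  le_sup (f := id) (mem_sdiff.mpr ⟨mem_range.mpr (Nat.lt_succ_of_le hvn), hvS⟩)

/-- The unique bad vertex if there is one, and `1` otherwise. -/
def badVertex (n : ℕ) (S : Finset ℕ) (δ : ℕ → ℕ) : ℕ := max ((badSet n S δ).sup id) 1

namespace ReachableState

variable {n : ℕ} {S S' : Finset ℕ} {δ : ℕ → ℕ}

lemma lastRmvd_notMem (h : ReachableState n S δ) : lastRmvd n S ∉ S := by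
  have h0 : 0 ∈ range (n + 1) \ S :=
    mem_sdiff.mpr ⟨by simp, fun h0 => by simpa using h.1 h0⟩
  obtain ⟨b, hb, hsup⟩ := exists_mem_eq_sup _ ⟨0, h0⟩ id
  rw [lastRmvd, hsup]
  exact (mem_sdiff.mp hb).2

lemma eq_badVertex (h : ReachableState n S δ) {v : ℕ} (hv : v ∈ badSet n S δ) :
    v = badVertex n S δ := by
  have hsup : (badSet n S δ).sup id = v :=
    le_antisymm (Finset.sup_le fun w hw => (card_le_one.mp h.2.2.2.2.2 w hw v hv).le)
      (le_sup (f := id) hv)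
  have hv1 : 1 ≤ v := (mem_Icc.mp (h.1 (mem_filter.mp hv).1)).1
  rw [badVertex, hsup, max_eq_left hv1]

lemma badVertex_mem (h : ReachableState n S δ) : badVertex n S δ ∈ S := by
  rcases (badSet n S δ).eq_empty_or_nonempty with hempty | ⟨v, hv⟩
  · simpa [badVertex, hempty] using h.2.1
  · exact eq_badVertex h hv ▸ (mem_filter.mp hv).1

lemma sum_Icc_eq (h : ReachableState n S δ) : ∑ v ∈ Icc 1 n, δ v = #S - 1 := by
  rw [← h.2.2.2.2.1]
  exact (sum_subset h.1 fun v _ hv => h.2.2.1 v hv).symm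

open Classical in
lemma mem_biUnion_piAntidiag (h : ReachableState n S δ) :
    δ ∈ (range n).biUnion (Icc 1 n).piAntidiag := by
  have hcard : #S ≤ n := by simpa using card_le_card h.1
  have hpos : 0 < #S := card_pos.mpr ⟨1, h.2.1⟩
  refine mem_biUnion.mpr ⟨#S - 1, mem_range.mpr (by omega), Finset.mem_piAntidiag.mpr
    ⟨sum_Icc_eq h, fun v hv => h.1 (not_imp_comm.mp (h.2.2.1 v) hv)⟩⟩

lemma lastRmvd_lt (hS : ReachableState n S δ) (hS' : ReachableState n S' δ)
    (hb : badVertex n S δ = badVertex n S' δ) {v : ℕ} (hvS : v ∈ S) (hvS' : v ∉ S') :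
    lastRmvd n S < v := by
  have hne : v ≠ lastRmvd n S := fun he => hS.lastRmvd_notMem (he ▸ hvS)
  refine lt_of_le_of_ne (not_lt.mp fun hlt => hvS' ?_) hne.symm
  have hbad : v ∈ badSet n S δ := mem_filter.mpr ⟨hvS, hlt, hS'.2.2.1 v hvS'⟩
  exact eq_badVertex hS hbad ▸ hb ▸ hS'.badVertex_mem

lemma eq_of_badVertex_eq (hS : ReachableState n S δ) (hS' : ReachableState n S' δ)
    (hb : badVertex n S δ = badVertex n S' δ) : S = S' := by
  have hcard : #S = #S' := by
    have := hS.sum_Icc_eq.symm.trans hS'.sum_Icc_eq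
    have := card_pos.mpr ⟨1, hS.2.1⟩
    have := card_pos.mpr ⟨1, hS'.2.1⟩
    omega
  by_contra hne
  obtain ⟨v, hvS, hvS'⟩ : ∃ v ∈ S, v ∉ S' :=
    not_subset.mp fun hsub => hne (eq_of_subset_of_card_le hsub hcard.ge)
  obtain ⟨w, hwS', hwS⟩ : ∃ w ∈ S', w ∉ S :=
    not_subset.mp fun hsub => hne (eq_of_subset_of_card_le hsub hcard.le).symm
  have := lastRmvd_lt hS hS' hb hvS hvS'
  have := lastRmvd_lt hS' hS hb.symm hwS' hwS
  have := le_lastRmvd (mem_Icc.mp (hS.1 hvS)).2 hvS'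
  have := le_lastRmvd (mem_Icc.mp (hS'.1 hwS')).2 hwS
  omega

end ReachableState

open Classical in
lemma card_reachableState_le (n : ℕ) :
    Nat.card {x : Finset ℕ × (ℕ → ℕ) // ReachableState n x.1 x.2}
      ≤ #(Icc 1 n ×ˢ (range n).biUnion (Icc 1 n).piAntidiag) := by
  rw [← Nat.card_eq_finsetCard]
  refine Nat.card_le_card_of_injective
    (fun x => ⟨(badVertex n x.1.1 x.1.2, x.1.2), mem_product.mpr
      ⟨x.2.1 x.2.badVertex_mem, x.2.mem_biUnion_piAntidiag⟩⟩) ?_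
  rintro ⟨⟨S, δ⟩, hS⟩ ⟨⟨S', δ'⟩, hS'⟩ heq
  obtain ⟨hb, rfl⟩ := Prod.ext_iff.mp (congrArg Subtype.val heq)
  simp only [Subtype.mk.injEq, Prod.mk.injEq, and_true]
  exact hS.eq_of_badVertex_eq hS' hb

/-- For `n ≥ 1`, the number of reachable states on `V = {1, …, n}` is at
most `n · C(2n−1, n)`. -/
theorem count_reachable_states (n : ℕ) (hn : 1 ≤ n) :
    Nat.card {x : Finset ℕ × (ℕ → ℕ) // ReachableState n x.1 x.2}
      ≤ n * Nat.choose (2 * n - 1) n := by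
  classical
  obtain ⟨m, rfl⟩ := Nat.exists_eq_add_of_le' hn
  calc Nat.card {x : Finset ℕ × (ℕ → ℕ) // ReachableState (m + 1) x.1 x.2}
      ≤ #(Icc 1 (m + 1) ×ˢ (range (m + 1)).biUnion (Icc 1 (m + 1)).piAntidiag) :=
        card_reachableState_le (m + 1)
    _ ≤ (m + 1) * (2 * m + 1).choose m := by
      rw [card_product, Nat.card_Icc, Nat.add_sub_cancel]
      gcongr
      refine (card_biUnion_range_piAntidiag_le (s := Icc 1 (m + 1)) (by simp) m).trans_eq ?_
      rw [Nat.card_Icc, show m + 1 + 1 - 1 + m = 2 * m + 1 by omega]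
    _ = (m + 1) * (2 * (m + 1) - 1).choose (m + 1) := by
      rw [show 2 * (m + 1) - 1 = 2 * m + 1 by omega, Nat.choose_symm_half]
end

section
/- Let (S, δ) be a reachable state on V = {1, …, n}, let s̄ = n − 1 − ∑_{v∈V} δ(v), and let Z = {v ∈ V : δ(v) = 0}. Then |V ∖ S| = s̄, |Z| ≥ s̄ + 1, and every element of V ∖ S is among the s̄ + 1 smallest elements of Z. -/
/-- Let `(S, δ)` be a reachable state on `V = {1, …, n}`, let
`s̄ = n − 1 − ∑_{v ∈ V} δ v` and `Z = {v ∈ V : δ v = 0}`. Then `|V ∖ S| = s̄`,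
`|Z| ≥ s̄ + 1`, and every element of `V ∖ S` is among the `s̄ + 1` smallest elements of `Z`
(i.e. each `v ∈ V ∖ S` lies in `Z` and at most `s̄ + 1` elements of `Z` are `≤ v`). -/
theorem reachable_state_structure (n : ℕ) (hn : 1 ≤ n)
    (S : Finset ℕ) (δ : ℕ → ℕ) (h : ReachableState n S δ)
    (sbar : ℕ) (hsbar : sbar = n - 1 - ∑ v ∈ Finset.Icc 1 n, δ v)
    (Z : Finset ℕ) (hZ : Z = (Finset.Icc 1 n).filter (fun v => δ v = 0)) :
    (Finset.Icc 1 n \ S).card = sbar ∧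
    sbar + 1 ≤ Z.card ∧
    (∀ v ∈ Finset.Icc 1 n \ S,
      v ∈ Z ∧ (Z.filter (fun z => z ≤ v)).card ≤ sbar + 1) := by
  obtain ⟨hSV, h1S, hzero, hδ1, hsum, hbad⟩ := h
  have hcardS : 1 ≤ S.card := Finset.card_pos.2 ⟨1, h1S⟩
  have hcardle : S.card ≤ n := by
    simpa using Finset.card_le_card hSV
  have hsumV : ∑ v ∈ Finset.Icc 1 n, δ v = S.card - 1 := by
    rw [← hsum]
    exact (Finset.sum_subset hSV (fun x _ hx => hzero x hx)).symm
  have hsbar' : sbar = n - S.card := by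
    rw [hsbar, hsumV]; omega
  have hpart1 : (Finset.Icc 1 n \ S).card = sbar := by
    rw [Finset.card_sdiff_of_subset hSV, hsbar']
    simp
  refine ⟨hpart1, ?_, ?_⟩
  · -- there is some z₀ ∈ S with δ z₀ = 0
    obtain ⟨z₀, hz₀S, hz₀⟩ : ∃ z₀ ∈ S, δ z₀ = 0 := by
      by_contra hc
      push_neg at hc
      have : S.card ≤ ∑ v ∈ S, δ v := by
        calc S.card = ∑ _v ∈ S, 1 := by simp
        _ ≤ ∑ v ∈ S, δ v := Finset.sum_le_sum (fun i hi => Nat.one_le_iff_ne_zero.2 (hc i hi))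
      omega
    have hsub : insert z₀ (Finset.Icc 1 n \ S) ⊆ Z := by
      intro x hx
      rw [hZ, Finset.mem_filter]
      rcases Finset.mem_insert.1 hx with rfl | hx
      · exact ⟨hSV hz₀S, hz₀⟩
      · rw [Finset.mem_sdiff] at hx
        exact ⟨hx.1, hzero x hx.2⟩
    have := Finset.card_le_card hsub
    rwa [Finset.card_insert_of_notMem (by simp [hz₀S]), hpart1] at this
  · intro v hv
    rw [Finset.mem_sdiff] at hv
    have hvZ : v ∈ Z := by
      rw [hZ, Finset.mem_filter]
      exact ⟨hv.1, hzero v hv.2⟩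
    refine ⟨hvZ, ?_⟩
    have hvle : v ≤ lastRmvd n S := by
      apply Finset.le_sup (f := id)
      rw [Finset.mem_sdiff, Finset.mem_range]
      have := Finset.mem_Icc.1 hv.1
      exact ⟨by omega, hv.2⟩
    have hsub : Z.filter (fun z => z ≤ v) ⊆ (Finset.Icc 1 n \ S) ∪ badSet n S δ := by
      intro z hz
      rw [Finset.mem_filter, hZ, Finset.mem_filter] at hz
      obtain ⟨⟨hzV, hzδ⟩, hzv⟩ := hz
      rw [Finset.mem_union, Finset.mem_sdiff]
      by_cases hzS : z ∈ S
      · right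
        rw [badSet, Finset.mem_filter]
        have hne : z ≠ v := fun e => hv.2 (e ▸ hzS)
        exact ⟨hzS, lt_of_lt_of_le (lt_of_le_of_ne hzv hne) hvle, hzδ⟩
      · exact Or.inl ⟨hzV, hzS⟩
    calc (Z.filter (fun z => z ≤ v)).card
        ≤ ((Finset.Icc 1 n \ S) ∪ badSet n S δ).card := Finset.card_le_card hsub
      _ ≤ (Finset.Icc 1 n \ S).card + (badSet n S δ).card := Finset.card_union_le _ _
      _ ≤ sbar + 1 := by omega
end

section
/- Let V be a finite set, ε > 0 a real number, E and K positive natural numbers, d : V × V → ℕ a cost function, and OPT, ALG : V × V → ℕ multiplicity functions. Define d′(u,v) = ⌈K·d(u,v)/(ε·E)⌉ for all u, v. Assume: (1) ∑_{(u,v)} OPT(u,v) ≤ K; (2) E ≤ ∑_{(u,v)} d(u,v)·OPT(u,v); and (3) ∑_{(u,v)} d′(u,v)·ALG(u,v) ≤ ∑_{(u,v)} d′(u,v)·OPT(u,v). Then ∑_{(u,v)} d(u,v)·ALG(u,v) ≤ (1 + ε) · ∑_{(u,v)} d(u,v)·OPT(u,v). -/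
/-!
Rescale costs by `c = ε·E/K`: the rounded cost `d′ = ⌈d / c⌉` satisfies `d ≤ c·d′ < d + c`.
Hence `d(ALG) ≤ c·d′(ALG) ≤ c·d′(OPT) ≤ d(OPT) + c·|OPT| ≤ d(OPT) + ε·E ≤ (1 + ε)·d(OPT)`,
the rounding error being paid by at most `K` units of multiplicity at `c` each.
-/

open Finset

section CeilDiv

variable {α : Type*} [Field α] [LinearOrder α] [IsStrictOrderedRing α] [FloorRing α]
  {c : α}

theorem le_mul_ceil_div (hc : 0 < c) (x : α) : x ≤ c * ⌈x / c⌉ := by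
  have := Int.le_ceil (x / c)
  rwa [div_le_iff₀ hc, mul_comm] at this

theorem mul_ceil_div_lt (hc : 0 < c) (x : α) : c * ⌈x / c⌉ < x + c := by
  have := Int.ceil_lt_add_one (x / c)
  rwa [← sub_lt_iff_lt_add, lt_div_iff₀ hc, sub_mul, one_mul, sub_lt_iff_lt_add,
    mul_comm] at this

end CeilDiv

theorem sum_mul_le_sum_mul_add_of_ceil_div_le {ι : Type*} [Fintype ι] {c : ℝ} (hc : 0 < c)
    (d : ι → ℝ) (a o : ι → ℕ)
    (h : ∑ i, ⌈d i / c⌉ * (a i : ℤ) ≤ ∑ i, ⌈d i / c⌉ * (o i : ℤ)) :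
    ∑ i, d i * a i ≤ ∑ i, d i * o i + c * ∑ i, (o i : ℝ) := by
  have h' : ∑ i, (⌈d i / c⌉ : ℝ) * a i ≤ ∑ i, (⌈d i / c⌉ : ℝ) * o i := by exact_mod_cast h
  calc ∑ i, d i * a i
      ≤ ∑ i, c * ⌈d i / c⌉ * a i := by gcongr with i; exact le_mul_ceil_div hc _
    _ = c * ∑ i, (⌈d i / c⌉ : ℝ) * a i := by simp only [mul_sum, mul_assoc]
    _ ≤ c * ∑ i, (⌈d i / c⌉ : ℝ) * o i := by gcongr
    _ = ∑ i, c * ⌈d i / c⌉ * o i := by simp only [mul_sum, mul_assoc]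
    _ ≤ ∑ i, (d i + c) * o i := by gcongr with i; exact (mul_ceil_div_lt hc _).le
    _ = ∑ i, d i * o i + c * ∑ i, (o i : ℝ) := by simp only [add_mul, sum_add_distrib, mul_sum]

/-- **rounding analysis.** Let `V` be a finite set, `ε > 0` real,
`E, K` positive naturals, `d` a cost function and `OPT`, `ALG` multiplicity functions.
Put `d′(u,v) = ⌈K·d(u,v)/(ε·E)⌉`. If (1) `∑ OPT(u,v) ≤ K`, (2) `E ≤ d(OPT)`, and
(3) `d′(ALG) ≤ d′(OPT)`, then `d(ALG) ≤ (1 + ε)·d(OPT)`. -/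
theorem rounding_approximation
    {V : Type*} [Fintype V]
    (ε : ℝ) (hε : 0 < ε) (E K : ℕ) (hE : 0 < E) (hK : 0 < K)
    (d OPT ALG : V × V → ℕ)
    (d' : V × V → ℤ)
    (hd' : ∀ p : V × V, d' p = ⌈((K : ℝ) * (d p : ℝ)) / (ε * (E : ℝ))⌉)
    (h1 : ∑ p : V × V, OPT p ≤ K)
    (h2 : E ≤ ∑ p : V × V, d p * OPT p)
    (h3 : ∑ p : V × V, d' p * (ALG p : ℤ) ≤ ∑ p : V × V, d' p * (OPT p : ℤ)) :
    ∑ p : V × V, (d p : ℝ) * (ALG p : ℝ)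
      ≤ (1 + ε) * ∑ p : V × V, (d p : ℝ) * (OPT p : ℝ) := by
  set c : ℝ := ε * E / K
  have hc : 0 < c := by positivity
  have hd'c : ∀ p, d' p = ⌈(d p : ℝ) / c⌉ := fun p => by
    rw [hd' p, div_div_eq_mul_div, mul_comm]
  simp only [hd'c] at h3
  have hcK : c * K = ε * E := div_mul_cancel₀ _ (by positivity)
  have hOPT : c * ∑ p, (OPT p : ℝ) ≤ ε * E := by
    rw [← hcK]; gcongr; exact_mod_cast h1
  have hE_le : ε * E ≤ ε * ∑ p, (d p : ℝ) * OPT p := by gcongr; exact_mod_cast h2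
  linarith [sum_mul_le_sum_mul_add_of_ceil_div_le hc (fun p => (d p : ℝ)) ALG OPT h3]
end

section
/- For every real β with 1/3 < β < 1/2, one has 2^{h(β)} · 4^{1−β} · 2^{2β·h((1−β)/(4β))} ≤ 7.68, where h denotes the binary entropy function. -/
set_option maxHeartbeats 1000000


/-- The binary entropy function `h(x) = −x·log₂ x − (1−x)·log₂(1−x)` (with the convention
`h 0 = h 1 = 0`, which the formula satisfies since `Real.logb 2 0 = 0` in Mathlib). -/
noncomputable def binEnt (x : ℝ) : ℝ := -(x * Real.logb 2 x) - (1 - x) * Real.logb 2 (1 - x)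

theorem ln_192_25 : (2.038619526287 : ℝ) ≤ Real.log (192/25) ∧ Real.log ((192 : ℝ)/25) ≤ 2.038619567963 := by
  have h0 : Real.log (((192:ℝ)/25)^17 * 2^0 / 2^50) = 17 * Real.log ((192:ℝ)/25) + 0 * Real.log 2 - 50 * Real.log 2 := by
    rw [Real.log_div (by positivity) (by positivity), Real.log_mul (by positivity) (by positivity)]
    simp only [Real.log_pow]
    push_cast; ring
  have h0' : (((192:ℝ)/25)^17 * 2^0 / 2^50) = ((581595589965365114830848:ℝ)/582076609134674072265625) := by norm_num
  rw [h0'] at h0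
  have h1 : Real.log ((581595589965365114830848:ℝ)/582076609134674072265625) ≤ (581595589965365114830848:ℝ)/582076609134674072265625 - 1 := Real.log_le_sub_one_of_pos (by norm_num)
  have h2 : 1 - ((581595589965365114830848:ℝ)/582076609134674072265625)⁻¹ ≤ Real.log ((581595589965365114830848:ℝ)/582076609134674072265625) := Real.one_sub_inv_le_log_of_pos (by norm_num)
  have h3 : ((581595589965365114830848:ℝ)/582076609134674072265625)⁻¹ = (582076609134674072265625:ℝ)/581595589965365114830848 := by norm_num
  rw [h3] at h2
  have l2a := Real.log_two_gt_d9
  have l2b := Real.log_two_lt_d9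
  constructor <;> linarith

theorem ln_7_20 : (-1.049822821248 : ℝ) ≤ Real.log (7/20) ∧ Real.log ((7 : ℝ)/20) ≤ -1.049821430949 := by
  have h0 : Real.log (((7:ℝ)/20)^35 * 2^53 / 2^0) = 35 * Real.log ((7:ℝ)/20) + 53 * Real.log 2 - 0 * Real.log 2 := by
    rw [Real.log_div (by positivity) (by positivity), Real.log_mul (by positivity) (by positivity)]
    simp only [Real.log_pow]
    push_cast; ring
  have h0' : (((7:ℝ)/20)^35 * 2^53 / 2^0) = ((378818692265664781682717625943:ℝ)/381469726562500000000000000000) := by norm_num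
  rw [h0'] at h0
  have h1 : Real.log ((378818692265664781682717625943:ℝ)/381469726562500000000000000000) ≤ (378818692265664781682717625943:ℝ)/381469726562500000000000000000 - 1 := Real.log_le_sub_one_of_pos (by norm_num)
  have h2 : 1 - ((378818692265664781682717625943:ℝ)/381469726562500000000000000000)⁻¹ ≤ Real.log ((378818692265664781682717625943:ℝ)/381469726562500000000000000000) := Real.one_sub_inv_le_log_of_pos (by norm_num)
  have h3 : ((378818692265664781682717625943:ℝ)/381469726562500000000000000000)⁻¹ = (381469726562500000000000000000:ℝ)/378818692265664781682717625943 := by norm_num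
  rw [h3] at h2
  have l2a := Real.log_two_gt_d9
  have l2b := Real.log_two_lt_d9
  constructor <;> linarith

theorem ln_13_20 : (-0.430783073869 : ℝ) ≤ Real.log (13/20) ∧ Real.log ((13 : ℝ)/20) ≤ -0.430782757944 := by
  have h0 : Real.log (((13:ℝ)/20)^37 * 2^23 / 2^0) = 37 * Real.log ((13:ℝ)/20) + 23 * Real.log 2 - 0 * Real.log 2 := by
    rw [Real.log_div (by positivity) (by positivity), Real.log_mul (by positivity) (by positivity)]
    simp only [Real.log_pow]
    push_cast; ring
  have h0' : (((13:ℝ)/20)^37 * 2^23 / 2^0) = ((164400841185494513395503358052498933338333:ℝ)/163840000000000000000000000000000000000000) := by norm_num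
  rw [h0'] at h0
  have h1 : Real.log ((164400841185494513395503358052498933338333:ℝ)/163840000000000000000000000000000000000000) ≤ (164400841185494513395503358052498933338333:ℝ)/163840000000000000000000000000000000000000 - 1 := Real.log_le_sub_one_of_pos (by norm_num)
  have h2 : 1 - ((164400841185494513395503358052498933338333:ℝ)/163840000000000000000000000000000000000000)⁻¹ ≤ Real.log ((164400841185494513395503358052498933338333:ℝ)/163840000000000000000000000000000000000000) := Real.one_sub_inv_le_log_of_pos (by norm_num)
  have h3 : ((164400841185494513395503358052498933338333:ℝ)/163840000000000000000000000000000000000000)⁻¹ = (163840000000000000000000000000000000000000:ℝ)/164400841185494513395503358052498933338333 := by norm_num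
  rw [h3] at h2
  have l2a := Real.log_two_gt_d9
  have l2b := Real.log_two_lt_d9
  constructor <;> linarith

theorem ln_3_4 : (-0.287683681108 : ℝ) ≤ Real.log (3/4) ∧ Real.log ((3 : ℝ)/4) ≤ -0.287680476033 := by
  have h0 : Real.log (((3:ℝ)/4)^41 * 2^17 / 2^0) = 41 * Real.log ((3:ℝ)/4) + 17 * Real.log 2 - 0 * Real.log 2 := by
    rw [Real.log_div (by positivity) (by positivity), Real.log_mul (by positivity) (by positivity)]
    simp only [Real.log_pow]
    push_cast; ring
  have h0' : (((3:ℝ)/4)^41 * 2^17 / 2^0) = ((36472996377170786403:ℝ)/36893488147419103232) := by norm_num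
  rw [h0'] at h0
  have h1 : Real.log ((36472996377170786403:ℝ)/36893488147419103232) ≤ (36472996377170786403:ℝ)/36893488147419103232 - 1 := Real.log_le_sub_one_of_pos (by norm_num)
  have h2 : 1 - ((36472996377170786403:ℝ)/36893488147419103232)⁻¹ ≤ Real.log ((36472996377170786403:ℝ)/36893488147419103232) := Real.one_sub_inv_le_log_of_pos (by norm_num)
  have h3 : ((36472996377170786403:ℝ)/36893488147419103232)⁻¹ = (36893488147419103232:ℝ)/36472996377170786403 := by norm_num
  rw [h3] at h2
  have l2a := Real.log_two_gt_d9
  have l2b := Real.log_two_lt_d9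
  constructor <;> linarith

theorem ln_19_50 : (-0.967587519688 : ℝ) ≤ Real.log (19/50) ∧ Real.log ((19 : ℝ)/50) ≤ -0.967580572822 := by
  have h0 : Real.log (((19:ℝ)/50)^43 * 2^60 / 2^0) = 43 * Real.log ((19:ℝ)/50) + 60 * Real.log 2 - 0 * Real.log 2 := by
    rw [Real.log_div (by positivity) (by positivity), Real.log_mul (by positivity) (by positivity)]
    simp only [Real.log_pow]
    push_cast; ring
  have h0' : (((19:ℝ)/50)^43 * 2^60 / 2^0) = ((1270324772344046172612117201122186295196570948826610749800448:ℝ)/1292469707114105741986576081359316958696581423282623291015625) := by norm_num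
  rw [h0'] at h0
  have h1 : Real.log ((1270324772344046172612117201122186295196570948826610749800448:ℝ)/1292469707114105741986576081359316958696581423282623291015625) ≤ (1270324772344046172612117201122186295196570948826610749800448:ℝ)/1292469707114105741986576081359316958696581423282623291015625 - 1 := Real.log_le_sub_one_of_pos (by norm_num)
  have h2 : 1 - ((1270324772344046172612117201122186295196570948826610749800448:ℝ)/1292469707114105741986576081359316958696581423282623291015625)⁻¹ ≤ Real.log ((1270324772344046172612117201122186295196570948826610749800448:ℝ)/1292469707114105741986576081359316958696581423282623291015625) := Real.one_sub_inv_le_log_of_pos (by norm_num)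
  have h3 : ((1270324772344046172612117201122186295196570948826610749800448:ℝ)/1292469707114105741986576081359316958696581423282623291015625)⁻¹ = (1292469707114105741986576081359316958696581423282623291015625:ℝ)/1270324772344046172612117201122186295196570948826610749800448 := by norm_num
  rw [h3] at h2
  have l2a := Real.log_two_gt_d9
  have l2b := Real.log_two_lt_d9
  constructor <;> linarith

theorem ln_31_50 : (-0.478035801263 : ℝ) ≤ Real.log (31/50) ∧ Real.log ((31 : ℝ)/50) ≤ -0.478035800609 := by
  have h0 : Real.log (((31:ℝ)/50)^29 * 2^20 / 2^0) = 29 * Real.log ((31:ℝ)/50) + 20 * Real.log 2 - 0 * Real.log 2 := by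
    rw [Real.log_div (by positivity) (by positivity), Real.log_mul (by positivity) (by positivity)]
    simp only [Real.log_pow]
    push_cast; ring
  have h0' : (((31:ℝ)/50)^29 * 2^20 / 2^0) = ((17761887753093897979823770061456102763834271:ℝ)/17763568394002504646778106689453125000000000) := by norm_num
  rw [h0'] at h0
  have h1 : Real.log ((17761887753093897979823770061456102763834271:ℝ)/17763568394002504646778106689453125000000000) ≤ (17761887753093897979823770061456102763834271:ℝ)/17763568394002504646778106689453125000000000 - 1 := Real.log_le_sub_one_of_pos (by norm_num)
  have h2 : 1 - ((17761887753093897979823770061456102763834271:ℝ)/17763568394002504646778106689453125000000000)⁻¹ ≤ Real.log ((17761887753093897979823770061456102763834271:ℝ)/17763568394002504646778106689453125000000000) := Real.one_sub_inv_le_log_of_pos (by norm_num)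
  have h3 : ((17761887753093897979823770061456102763834271:ℝ)/17763568394002504646778106689453125000000000)⁻¹ = (17763568394002504646778106689453125000000000:ℝ)/17761887753093897979823770061456102763834271 := by norm_num
  rw [h3] at h2
  have l2a := Real.log_two_gt_d9
  have l2b := Real.log_two_lt_d9
  constructor <;> linarith

theorem ln_9_10 : (-0.105362410168 : ℝ) ≤ Real.log (9/10) ∧ Real.log ((9 : ℝ)/10) ≤ -0.105358635189 := by
  have h0 : Real.log (((9:ℝ)/10)^33 * 2^5 / 2^0) = 33 * Real.log ((9:ℝ)/10) + 5 * Real.log 2 - 0 * Real.log 2 := by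
    rw [Real.log_div (by positivity) (by positivity), Real.log_mul (by positivity) (by positivity)]
    simp only [Real.log_pow]
    push_cast; ring
  have h0' : (((9:ℝ)/10)^33 * 2^5 / 2^0) = ((30903154382632612361920641803529:ℝ)/31250000000000000000000000000000) := by norm_num
  rw [h0'] at h0
  have h1 : Real.log ((30903154382632612361920641803529:ℝ)/31250000000000000000000000000000) ≤ (30903154382632612361920641803529:ℝ)/31250000000000000000000000000000 - 1 := Real.log_le_sub_one_of_pos (by norm_num)
  have h2 : 1 - ((30903154382632612361920641803529:ℝ)/31250000000000000000000000000000)⁻¹ ≤ Real.log ((30903154382632612361920641803529:ℝ)/31250000000000000000000000000000) := Real.one_sub_inv_le_log_of_pos (by norm_num)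
  have h3 : ((30903154382632612361920641803529:ℝ)/31250000000000000000000000000000)⁻¹ = (31250000000000000000000000000000:ℝ)/30903154382632612361920641803529 := by norm_num
  rw [h3] at h2
  have l2a := Real.log_two_gt_d9
  have l2b := Real.log_two_lt_d9
  constructor <;> linarith

theorem ln_21_50 : (-0.867502846481 : ℝ) ≤ Real.log (21/50) ∧ Real.log ((21 : ℝ)/50) ≤ -0.867498295375 := by
  have h0 : Real.log (((21:ℝ)/50)^4 * 2^5 / 2^0) = 4 * Real.log ((21:ℝ)/50) + 5 * Real.log 2 - 0 * Real.log 2 := by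
    rw [Real.log_div (by positivity) (by positivity), Real.log_mul (by positivity) (by positivity)]
    simp only [Real.log_pow]
    push_cast; ring
  have h0' : (((21:ℝ)/50)^4 * 2^5 / 2^0) = ((388962:ℝ)/390625) := by norm_num
  rw [h0'] at h0
  have h1 : Real.log ((388962:ℝ)/390625) ≤ (388962:ℝ)/390625 - 1 := Real.log_le_sub_one_of_pos (by norm_num)
  have h2 : 1 - ((388962:ℝ)/390625)⁻¹ ≤ Real.log ((388962:ℝ)/390625) := Real.one_sub_inv_le_log_of_pos (by norm_num)
  have h3 : ((388962:ℝ)/390625)⁻¹ = (390625:ℝ)/388962 := by norm_num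
  rw [h3] at h2
  have l2a := Real.log_two_gt_d9
  have l2b := Real.log_two_lt_d9
  constructor <;> linarith

theorem ln_29_50 : (-0.544727262754 : ℝ) ≤ Real.log (29/50) ∧ Real.log ((29 : ℝ)/50) ≤ -0.544727088204 := by
  have h0 : Real.log (((29:ℝ)/50)^14 * 2^11 / 2^0) = 14 * Real.log ((29:ℝ)/50) + 11 * Real.log 2 - 0 * Real.log 2 := by
    rw [Real.log_div (by positivity) (by positivity), Real.log_mul (by positivity) (by positivity)]
    simp only [Real.log_pow]
    push_cast; ring
  have h0' : (((29:ℝ)/50)^14 * 2^11 / 2^0) = ((297558232675799463481:ℝ)/298023223876953125000) := by norm_num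
  rw [h0'] at h0
  have h1 : Real.log ((297558232675799463481:ℝ)/298023223876953125000) ≤ (297558232675799463481:ℝ)/298023223876953125000 - 1 := Real.log_le_sub_one_of_pos (by norm_num)
  have h2 : 1 - ((297558232675799463481:ℝ)/298023223876953125000)⁻¹ ≤ Real.log ((297558232675799463481:ℝ)/298023223876953125000) := Real.one_sub_inv_le_log_of_pos (by norm_num)
  have h3 : ((297558232675799463481:ℝ)/298023223876953125000)⁻¹ = (298023223876953125000:ℝ)/297558232675799463481 := by norm_num
  rw [h3] at h2
  have l2a := Real.log_two_gt_d9
  have l2b := Real.log_two_lt_d9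
  constructor <;> linarith

theorem ln_11_10 : (0.095308902865 : ℝ) ≤ Real.log (11/10) ∧ Real.log ((11 : ℝ)/10) ≤ 0.095311449446 := by
  have h0 : Real.log (((11:ℝ)/10)^29 * 2^0 / 2^4) = 29 * Real.log ((11:ℝ)/10) + 0 * Real.log 2 - 4 * Real.log 2 := by
    rw [Real.log_div (by positivity) (by positivity), Real.log_mul (by positivity) (by positivity)]
    simp only [Real.log_pow]
    push_cast; ring
  have h0' : (((11:ℝ)/10)^29 * 2^0 / 2^4) = ((1586309297171491574414436704891:ℝ)/1600000000000000000000000000000) := by norm_num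
  rw [h0'] at h0
  have h1 : Real.log ((1586309297171491574414436704891:ℝ)/1600000000000000000000000000000) ≤ (1586309297171491574414436704891:ℝ)/1600000000000000000000000000000 - 1 := Real.log_le_sub_one_of_pos (by norm_num)
  have h2 : 1 - ((1586309297171491574414436704891:ℝ)/1600000000000000000000000000000)⁻¹ ≤ Real.log ((1586309297171491574414436704891:ℝ)/1600000000000000000000000000000) := Real.one_sub_inv_le_log_of_pos (by norm_num)
  have h3 : ((1586309297171491574414436704891:ℝ)/1600000000000000000000000000000)⁻¹ = (1600000000000000000000000000000:ℝ)/1586309297171491574414436704891 := by norm_num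
  rw [h3] at h2
  have l2a := Real.log_two_gt_d9
  have l2b := Real.log_two_lt_d9
  constructor <;> linarith

theorem ln_47_100 : (-0.755024138927 : ℝ) ≤ Real.log (47/100) ∧ Real.log ((47 : ℝ)/100) ≤ -0.755021041792 := by
  have h0 : Real.log (((47:ℝ)/100)^45 * 2^49 / 2^0) = 45 * Real.log ((47:ℝ)/100) + 49 * Real.log 2 - 0 * Real.log 2 := by
    rw [Real.log_div (by positivity) (by positivity), Real.log_mul (by positivity) (by positivity)]
    simp only [Real.log_pow]
    push_cast; ring
  have h0' : (((47:ℝ)/100)^45 * 2^49 / 2^0) = ((1755511210260049172778020908173078657717675374080672665297567056535308458607:ℝ)/1776356839400250464677810668945312500000000000000000000000000000000000000000) := by norm_num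
  rw [h0'] at h0
  have h1 : Real.log ((1755511210260049172778020908173078657717675374080672665297567056535308458607:ℝ)/1776356839400250464677810668945312500000000000000000000000000000000000000000) ≤ (1755511210260049172778020908173078657717675374080672665297567056535308458607:ℝ)/1776356839400250464677810668945312500000000000000000000000000000000000000000 - 1 := Real.log_le_sub_one_of_pos (by norm_num)
  have h2 : 1 - ((1755511210260049172778020908173078657717675374080672665297567056535308458607:ℝ)/1776356839400250464677810668945312500000000000000000000000000000000000000000)⁻¹ ≤ Real.log ((1755511210260049172778020908173078657717675374080672665297567056535308458607:ℝ)/1776356839400250464677810668945312500000000000000000000000000000000000000000) := Real.one_sub_inv_le_log_of_pos (by norm_num)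
  have h3 : ((1755511210260049172778020908173078657717675374080672665297567056535308458607:ℝ)/1776356839400250464677810668945312500000000000000000000000000000000000000000)⁻¹ = (1776356839400250464677810668945312500000000000000000000000000000000000000000:ℝ)/1755511210260049172778020908173078657717675374080672665297567056535308458607 := by norm_num
  rw [h3] at h2
  have l2a := Real.log_two_gt_d9
  have l2b := Real.log_two_lt_d9
  constructor <;> linarith

theorem ln_53_100 : (-0.634879809663 : ℝ) ≤ Real.log (53/100) ∧ Real.log ((53 : ℝ)/100) ≤ -0.634876728948 := by
  have h0 : Real.log (((53:ℝ)/100)^12 * 2^11 / 2^0) = 12 * Real.log ((53:ℝ)/100) + 11 * Real.log 2 - 0 * Real.log 2 := by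
    rw [Real.log_div (by positivity) (by positivity), Real.log_mul (by positivity) (by positivity)]
    simp only [Real.log_pow]
    push_cast; ring
  have h0' : (((53:ℝ)/100)^12 * 2^11 / 2^0) = ((491258904256726154641:ℝ)/488281250000000000000) := by norm_num
  rw [h0'] at h0
  have h1 : Real.log ((491258904256726154641:ℝ)/488281250000000000000) ≤ (491258904256726154641:ℝ)/488281250000000000000 - 1 := Real.log_le_sub_one_of_pos (by norm_num)
  have h2 : 1 - ((491258904256726154641:ℝ)/488281250000000000000)⁻¹ ≤ Real.log ((491258904256726154641:ℝ)/488281250000000000000) := Real.one_sub_inv_le_log_of_pos (by norm_num)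
  have h3 : ((491258904256726154641:ℝ)/488281250000000000000)⁻¹ = (488281250000000000000:ℝ)/491258904256726154641 := by norm_num
  rw [h3] at h2
  have l2a := Real.log_two_gt_d9
  have l2b := Real.log_two_lt_d9
  constructor <;> linarith

theorem ln_27_20 : (0.300103582061 : ℝ) ≤ Real.log (27/20) ∧ Real.log ((27 : ℝ)/20) ≤ 0.300105597607 := by
  have h0 : Real.log (((27:ℝ)/20)^30 * 2^0 / 2^13) = 30 * Real.log ((27:ℝ)/20) + 0 * Real.log 2 - 13 * Real.log 2 := by
    rw [Real.log_div (by positivity) (by positivity), Real.log_mul (by positivity) (by positivity)]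
    simp only [Real.log_pow]
    push_cast; ring
  have h0' : (((27:ℝ)/20)^30 * 2^0 / 2^13) = ((8727963568087712425891397479476727340041449:ℝ)/8796093022208000000000000000000000000000000) := by norm_num
  rw [h0'] at h0
  have h1 : Real.log ((8727963568087712425891397479476727340041449:ℝ)/8796093022208000000000000000000000000000000) ≤ (8727963568087712425891397479476727340041449:ℝ)/8796093022208000000000000000000000000000000 - 1 := Real.log_le_sub_one_of_pos (by norm_num)
  have h2 : 1 - ((8727963568087712425891397479476727340041449:ℝ)/8796093022208000000000000000000000000000000)⁻¹ ≤ Real.log ((8727963568087712425891397479476727340041449:ℝ)/8796093022208000000000000000000000000000000) := Real.one_sub_inv_le_log_of_pos (by norm_num)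
  have h3 : ((8727963568087712425891397479476727340041449:ℝ)/8796093022208000000000000000000000000000000)⁻¹ = (8796093022208000000000000000000000000000000:ℝ)/8727963568087712425891397479476727340041449 := by norm_num
  rw [h3] at h2
  have l2a := Real.log_two_gt_d9
  have l2b := Real.log_two_lt_d9
  constructor <;> linarith

theorem piece1 (β : ℝ) (hl : (1/3) ≤ β) (hr : β ≤ (1093/3000)) :
    2*(1+β)*Real.log 2 + β * Real.log β - (3*(1-β)/2) * Real.log (1-β) -
      ((5*β-1)/2) * Real.log (5*β-1) ≤ Real.log (192/25) := by
  have hβ : (0:ℝ) < β := by linarith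
  have hβ1 : (0:ℝ) < 1 - β := by linarith
  have hβ2 : (0:ℝ) < 5*β - 1 := by linarith
  have c0 := ln_7_20; have c1 := ln_13_20; have c2 := ln_3_4; have c768 := ln_192_25
  have t1 : Real.log β ≤ Real.log ((7/20)) + (β - (7/20))/(7/20) := by
    have h := Real.log_le_sub_one_of_pos (x := β/(7/20)) (by positivity)
    rw [Real.log_div (ne_of_gt hβ) (by norm_num)] at h
    have e : β/(7/20) - 1 = (β - (7/20))/(7/20) := by ring
    rw [e] at h; linarith
  have t1a : Real.log β ≤ -1.049821430949 + (β - (7/20))/(7/20) := by linarith [c0.2]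
  have t1' : β * Real.log β ≤ β * (-1.049821430949 + (β - (7/20))/(7/20)) :=
    mul_le_mul_of_nonneg_left t1a hβ.le
  have t2 : Real.log ((13/20)) - Real.log (1-β) ≤ (13/20)/(1-β) - 1 := by
    have h := Real.log_le_sub_one_of_pos (x := (13/20)/(1-β)) (by positivity)
    rwa [Real.log_div (by norm_num) (ne_of_gt hβ1)] at h
  have t2' : (1-β) * Real.log (1-β) ≥ (1-β) * (-0.430783073869) - (β - (7/20)) := by
    have h3 := mul_le_mul_of_nonneg_left t2 hβ1.le
    have h4 : (1-β)*((13/20)/(1-β) - 1) = (13/20) - (1-β) := by field_simp <;> ring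
    have h5 := mul_le_mul_of_nonneg_left (c1.1) hβ1.le
    nlinarith [h3, h4, h5]
  have t3 : Real.log ((3/4)) - Real.log (5*β-1) ≤ (3/4)/(5*β-1) - 1 := by
    have h := Real.log_le_sub_one_of_pos (x := (3/4)/(5*β-1)) (by positivity)
    rwa [Real.log_div (by norm_num) (ne_of_gt hβ2)] at h
  have t3' : (5*β-1) * Real.log (5*β-1) ≥ (5*β-1) * (-0.287683681108) + 5*(β - (7/20)) := by
    have h3 := mul_le_mul_of_nonneg_left t3 hβ2.le
    have h4 : (5*β-1)*((3/4)/(5*β-1) - 1) = (3/4) - (5*β-1) := by field_simp <;> ring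
    have h5 := mul_le_mul_of_nonneg_left (c2.1) hβ2.le
    nlinarith [h3, h4, h5]
  have t0 : 2*(1+β)*Real.log 2 ≤ 2*(1+β)*0.6931471808 := by
    have := mul_le_mul_of_nonneg_left Real.log_two_lt_d9.le (by linarith : (0:ℝ) ≤ 2*(1+β))
    linarith
  have hquad : (0:ℝ) ≤ (β - (1/3)) * ((1093/3000) - β) :=
    mul_nonneg (by linarith) (by linarith)
  nlinarith [t0, t1', t2', t3', hquad, c768.1]

theorem piece2 (β : ℝ) (hl : (1093/3000) ≤ β) (hr : β ≤ (1201/3000)) :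
    2*(1+β)*Real.log 2 + β * Real.log β - (3*(1-β)/2) * Real.log (1-β) -
      ((5*β-1)/2) * Real.log (5*β-1) ≤ Real.log (192/25) := by
  have hβ : (0:ℝ) < β := by linarith
  have hβ1 : (0:ℝ) < 1 - β := by linarith
  have hβ2 : (0:ℝ) < 5*β - 1 := by linarith
  have c0 := ln_19_50; have c1 := ln_31_50; have c2 := ln_9_10; have c768 := ln_192_25
  have t1 : Real.log β ≤ Real.log ((19/50)) + (β - (19/50))/(19/50) := by
    have h := Real.log_le_sub_one_of_pos (x := β/(19/50)) (by positivity)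
    rw [Real.log_div (ne_of_gt hβ) (by norm_num)] at h
    have e : β/(19/50) - 1 = (β - (19/50))/(19/50) := by ring
    rw [e] at h; linarith
  have t1a : Real.log β ≤ -0.967580572822 + (β - (19/50))/(19/50) := by linarith [c0.2]
  have t1' : β * Real.log β ≤ β * (-0.967580572822 + (β - (19/50))/(19/50)) :=
    mul_le_mul_of_nonneg_left t1a hβ.le
  have t2 : Real.log ((31/50)) - Real.log (1-β) ≤ (31/50)/(1-β) - 1 := by
    have h := Real.log_le_sub_one_of_pos (x := (31/50)/(1-β)) (by positivity)
    rwa [Real.log_div (by norm_num) (ne_of_gt hβ1)] at h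
  have t2' : (1-β) * Real.log (1-β) ≥ (1-β) * (-0.478035801263) - (β - (19/50)) := by
    have h3 := mul_le_mul_of_nonneg_left t2 hβ1.le
    have h4 : (1-β)*((31/50)/(1-β) - 1) = (31/50) - (1-β) := by field_simp <;> ring
    have h5 := mul_le_mul_of_nonneg_left (c1.1) hβ1.le
    nlinarith [h3, h4, h5]
  have t3 : Real.log ((9/10)) - Real.log (5*β-1) ≤ (9/10)/(5*β-1) - 1 := by
    have h := Real.log_le_sub_one_of_pos (x := (9/10)/(5*β-1)) (by positivity)
    rwa [Real.log_div (by norm_num) (ne_of_gt hβ2)] at h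
  have t3' : (5*β-1) * Real.log (5*β-1) ≥ (5*β-1) * (-0.105362410168) + 5*(β - (19/50)) := by
    have h3 := mul_le_mul_of_nonneg_left t3 hβ2.le
    have h4 : (5*β-1)*((9/10)/(5*β-1) - 1) = (9/10) - (5*β-1) := by field_simp <;> ring
    have h5 := mul_le_mul_of_nonneg_left (c2.1) hβ2.le
    nlinarith [h3, h4, h5]
  have t0 : 2*(1+β)*Real.log 2 ≤ 2*(1+β)*0.6931471808 := by
    have := mul_le_mul_of_nonneg_left Real.log_two_lt_d9.le (by linarith : (0:ℝ) ≤ 2*(1+β))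
    linarith
  have hquad : (0:ℝ) ≤ (β - (1093/3000)) * ((1201/3000) - β) :=
    mul_nonneg (by linarith) (by linarith)
  nlinarith [t0, t1', t2', t3', hquad, c768.1]

theorem piece3 (β : ℝ) (hl : (1201/3000) ≤ β) (hr : β ≤ (1333/3000)) :
    2*(1+β)*Real.log 2 + β * Real.log β - (3*(1-β)/2) * Real.log (1-β) -
      ((5*β-1)/2) * Real.log (5*β-1) ≤ Real.log (192/25) := by
  have hβ : (0:ℝ) < β := by linarith
  have hβ1 : (0:ℝ) < 1 - β := by linarith
  have hβ2 : (0:ℝ) < 5*β - 1 := by linarith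
  have c0 := ln_21_50; have c1 := ln_29_50; have c2 := ln_11_10; have c768 := ln_192_25
  have t1 : Real.log β ≤ Real.log ((21/50)) + (β - (21/50))/(21/50) := by
    have h := Real.log_le_sub_one_of_pos (x := β/(21/50)) (by positivity)
    rw [Real.log_div (ne_of_gt hβ) (by norm_num)] at h
    have e : β/(21/50) - 1 = (β - (21/50))/(21/50) := by ring
    rw [e] at h; linarith
  have t1a : Real.log β ≤ -0.867498295375 + (β - (21/50))/(21/50) := by linarith [c0.2]
  have t1' : β * Real.log β ≤ β * (-0.867498295375 + (β - (21/50))/(21/50)) :=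
    mul_le_mul_of_nonneg_left t1a hβ.le
  have t2 : Real.log ((29/50)) - Real.log (1-β) ≤ (29/50)/(1-β) - 1 := by
    have h := Real.log_le_sub_one_of_pos (x := (29/50)/(1-β)) (by positivity)
    rwa [Real.log_div (by norm_num) (ne_of_gt hβ1)] at h
  have t2' : (1-β) * Real.log (1-β) ≥ (1-β) * (-0.544727262754) - (β - (21/50)) := by
    have h3 := mul_le_mul_of_nonneg_left t2 hβ1.le
    have h4 : (1-β)*((29/50)/(1-β) - 1) = (29/50) - (1-β) := by field_simp <;> ring
    have h5 := mul_le_mul_of_nonneg_left (c1.1) hβ1.le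
    nlinarith [h3, h4, h5]
  have t3 : Real.log ((11/10)) - Real.log (5*β-1) ≤ (11/10)/(5*β-1) - 1 := by
    have h := Real.log_le_sub_one_of_pos (x := (11/10)/(5*β-1)) (by positivity)
    rwa [Real.log_div (by norm_num) (ne_of_gt hβ2)] at h
  have t3' : (5*β-1) * Real.log (5*β-1) ≥ (5*β-1) * (0.095308902865) + 5*(β - (21/50)) := by
    have h3 := mul_le_mul_of_nonneg_left t3 hβ2.le
    have h4 : (5*β-1)*((11/10)/(5*β-1) - 1) = (11/10) - (5*β-1) := by field_simp <;> ring
    have h5 := mul_le_mul_of_nonneg_left (c2.1) hβ2.le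
    nlinarith [h3, h4, h5]
  have t0 : 2*(1+β)*Real.log 2 ≤ 2*(1+β)*0.6931471808 := by
    have := mul_le_mul_of_nonneg_left Real.log_two_lt_d9.le (by linarith : (0:ℝ) ≤ 2*(1+β))
    linarith
  have hquad : (0:ℝ) ≤ (β - (1201/3000)) * ((1333/3000) - β) :=
    mul_nonneg (by linarith) (by linarith)
  nlinarith [t0, t1', t2', t3', hquad, c768.1]

theorem piece4 (β : ℝ) (hl : (1333/3000) ≤ β) (hr : β ≤ (1/2)) :
    2*(1+β)*Real.log 2 + β * Real.log β - (3*(1-β)/2) * Real.log (1-β) -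
      ((5*β-1)/2) * Real.log (5*β-1) ≤ Real.log (192/25) := by
  have hβ : (0:ℝ) < β := by linarith
  have hβ1 : (0:ℝ) < 1 - β := by linarith
  have hβ2 : (0:ℝ) < 5*β - 1 := by linarith
  have c0 := ln_47_100; have c1 := ln_53_100; have c2 := ln_27_20; have c768 := ln_192_25
  have t1 : Real.log β ≤ Real.log ((47/100)) + (β - (47/100))/(47/100) := by
    have h := Real.log_le_sub_one_of_pos (x := β/(47/100)) (by positivity)
    rw [Real.log_div (ne_of_gt hβ) (by norm_num)] at h
    have e : β/(47/100) - 1 = (β - (47/100))/(47/100) := by ring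
    rw [e] at h; linarith
  have t1a : Real.log β ≤ -0.755021041792 + (β - (47/100))/(47/100) := by linarith [c0.2]
  have t1' : β * Real.log β ≤ β * (-0.755021041792 + (β - (47/100))/(47/100)) :=
    mul_le_mul_of_nonneg_left t1a hβ.le
  have t2 : Real.log ((53/100)) - Real.log (1-β) ≤ (53/100)/(1-β) - 1 := by
    have h := Real.log_le_sub_one_of_pos (x := (53/100)/(1-β)) (by positivity)
    rwa [Real.log_div (by norm_num) (ne_of_gt hβ1)] at h
  have t2' : (1-β) * Real.log (1-β) ≥ (1-β) * (-0.634879809663) - (β - (47/100)) := by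
    have h3 := mul_le_mul_of_nonneg_left t2 hβ1.le
    have h4 : (1-β)*((53/100)/(1-β) - 1) = (53/100) - (1-β) := by field_simp <;> ring
    have h5 := mul_le_mul_of_nonneg_left (c1.1) hβ1.le
    nlinarith [h3, h4, h5]
  have t3 : Real.log ((27/20)) - Real.log (5*β-1) ≤ (27/20)/(5*β-1) - 1 := by
    have h := Real.log_le_sub_one_of_pos (x := (27/20)/(5*β-1)) (by positivity)
    rwa [Real.log_div (by norm_num) (ne_of_gt hβ2)] at h
  have t3' : (5*β-1) * Real.log (5*β-1) ≥ (5*β-1) * (0.300103582061) + 5*(β - (47/100)) := by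
    have h3 := mul_le_mul_of_nonneg_left t3 hβ2.le
    have h4 : (5*β-1)*((27/20)/(5*β-1) - 1) = (27/20) - (5*β-1) := by field_simp <;> ring
    have h5 := mul_le_mul_of_nonneg_left (c2.1) hβ2.le
    nlinarith [h3, h4, h5]
  have t0 : 2*(1+β)*Real.log 2 ≤ 2*(1+β)*0.6931471808 := by
    have := mul_le_mul_of_nonneg_left Real.log_two_lt_d9.le (by linarith : (0:ℝ) ≤ 2*(1+β))
    linarith
  have hquad : (0:ℝ) ≤ (β - (1333/3000)) * ((1/2) - β) :=
    mul_nonneg (by linarith) (by linarith)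
  nlinarith [t0, t1', t2', t3', hquad, c768.1]

theorem gbound (β : ℝ) (h1 : 1/3 < β) (h2 : β < 1/2) :
    2*(1+β)*Real.log 2 + β * Real.log β - (3*(1-β)/2) * Real.log (1-β) -
      ((5*β-1)/2) * Real.log (5*β-1) ≤ Real.log (192/25) := by
  rcases le_or_gt β (1093/3000) with h | h
  · exact piece1 β h1.le h
  rcases le_or_gt β (1201/3000) with h' | h'
  · exact piece2 β h.le h'
  rcases le_or_gt β (1333/3000) with h'' | h''
  · exact piece3 β h'.le h''
  · exact piece4 β h''.le h2.le

/-- For every real `β` with `1/3 < β < 1/2`,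
`2^{h(β)} · 4^{1−β} · 2^{2β·h((1−β)/(4β))} ≤ 7.68`. -/
theorem entropy_bound_middle_range (β : ℝ) (h1 : 1 / 3 < β) (h2 : β < 1 / 2) :
    (2 : ℝ) ^ (binEnt β) * (4 : ℝ) ^ (1 - β) *
      (2 : ℝ) ^ (2 * β * binEnt ((1 - β) / (4 * β))) ≤ 7.68 := by
  have hβ : (0:ℝ) < β := by linarith
  have hβ1 : (0:ℝ) < 1 - β := by linarith
  have hβ2 : (0:ℝ) < 5*β - 1 := by linarith
  have hl2 : Real.log 2 ≠ 0 := ne_of_gt (Real.log_pos (by norm_num))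
  have hlog4 : Real.log (4:ℝ) = 2 * Real.log 2 := by
    rw [show (4:ℝ) = 2^2 by norm_num, Real.log_pow]; push_cast; ring
  have e1 : Real.log ((1-β)/(4*β)) = Real.log (1-β) - 2*Real.log 2 - Real.log β := by
    rw [Real.log_div (by linarith) (by positivity), Real.log_mul (by norm_num) (ne_of_gt hβ), hlog4]
    ring
  have e2 : Real.log (1 - (1-β)/(4*β)) = Real.log (5*β-1) - 2*Real.log 2 - Real.log β := by
    rw [show 1 - (1-β)/(4*β) = (5*β-1)/(4*β) by field_simp; ring,
      Real.log_div (by linarith) (by positivity), Real.log_mul (by norm_num) (ne_of_gt hβ), hlog4]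
    ring
  have hE : Real.log 2 * binEnt β + Real.log 4 * (1-β) + Real.log 2 * (2*β*binEnt ((1-β)/(4*β))) =
      2*(1+β)*Real.log 2 + β * Real.log β - (3*(1-β)/2) * Real.log (1-β) -
        ((5*β-1)/2) * Real.log (5*β-1) := by
    simp only [binEnt, Real.logb, e1, e2, hlog4]
    field_simp
    ring
  rw [Real.rpow_def_of_pos (by norm_num : (0:ℝ)<2), Real.rpow_def_of_pos (by norm_num : (0:ℝ)<4),
    Real.rpow_def_of_pos (by norm_num : (0:ℝ)<2), ← Real.exp_add, ← Real.exp_add,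
    show (7.68:ℝ) = Real.exp (Real.log (192/25)) by rw [Real.exp_log (by norm_num)]; norm_num]
  apply Real.exp_le_exp.mpr
  rw [hE]
  exact gbound β h1 h2
end

section
/- For every real β with 1/2 ≤ β ≤ 1, one has 2^{h(β)} · 4^{β} · 2^{2β·h((1−β)/(4β))} ≤ 7.871, where h denotes the binary entropy function. -/
/-!
In natural logarithms the left-hand side is `exp φ(β)`, where `φ = entropyProductLog` is
`φ(β) = β log β − (3/2)(1−β) log(1−β) − ((5β−1)/2) log(5β−1) + 6β log 2`,
and `φ'' = 1/β − 3/(2(1−β)) − 25/(2(5β−1)) < 0`, so `φ` is concave on `[1/5, 1]`.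
The tangent to `φ` at a point `x₀` to the left of its maximiser is nondecreasing, hence bounded
on `[1/5, 1]` by its value at `1`, which simplifies to `log (64 x₀ / (5x₀ − 1)²)`.
Both conditions on `x₀` are polynomial inequalities, checked exactly.
-/

open Real Set

lemma binEnt_mul_log_two (x : ℝ) : binEnt x * log 2 = binEntropy x := by
  simp only [binEnt, binEntropy, logb, log_inv]
  field_simp
  ring

lemma ConcaveOn.le_add_mul_sub_of_hasDerivAt {S : Set ℝ} {f : ℝ → ℝ} {x y f' : ℝ}
    (hf : ConcaveOn ℝ S f) (hx : x ∈ S) (hy : y ∈ S) (hf' : HasDerivAt f f' x) :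
    f y ≤ f x + f' * (y - x) := by
  rcases lt_trichotomy y x with hyx | rfl | hxy
  · have := hf.le_slope_of_hasDerivAt hy hx hyx hf'
    rw [slope_def_field, le_div_iff₀ (sub_pos.2 hyx)] at this
    linarith
  · simp
  · have := hf.slope_le_of_hasDerivAt hx hy hxy hf'
    rw [slope_def_field, div_le_iff₀ (sub_pos.2 hxy)] at this
    linarith

noncomputable def entropyProductLog (x : ℝ) : ℝ :=
  -negMulLog x + 3 / 2 * negMulLog (1 - x) + 1 / 2 * negMulLog (5 * x - 1) + 6 * x * log 2

noncomputable def entropyProductLog' (x : ℝ) : ℝ :=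
  log x + 3 / 2 * log (1 - x) - 5 / 2 * log (5 * x - 1) + 6 * log 2

/-- Working with `negMulLog_mul` rather than `log_div` avoids a side condition `1 - β ≠ 0`, so
`β = 1` needs no separate treatment. -/
lemma entropyProductLog_eq {β : ℝ} (hβ : β ≠ 0) :
    entropyProductLog β =
      binEntropy β + 2 * β * log 2 + 2 * β * binEntropy ((1 - β) / (4 * β)) := by
  have hsplit : binEntropy ((1 - β) / (4 * β)) =
      (4 * β)⁻¹ * (negMulLog (1 - β) + negMulLog (5 * β - 1)) +
        (4 * β) * negMulLog (4 * β)⁻¹ := by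
    rw [binEntropy_eq_negMulLog_add_negMulLog_one_sub,
      show 1 - (1 - β) / (4 * β) = (5 * β - 1) * (4 * β)⁻¹ by field_simp; ring,
      div_eq_mul_inv, negMulLog_mul, negMulLog_mul]
    ring
  have hlog : negMulLog (4 * β)⁻¹ = (4 * β)⁻¹ * (2 * log 2 + log β) := by
    rw [negMulLog, log_inv, log_mul (by norm_num) hβ, show (4 : ℝ) = 2 ^ 2 by norm_num, log_pow]
    push_cast
    ring
  rw [hsplit, hlog, binEntropy_eq_negMulLog_add_negMulLog_one_sub]
  simp only [entropyProductLog, negMulLog]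
  field_simp
  ring

lemma hasDerivAt_entropyProductLog {x : ℝ} (h0 : x ≠ 0) (h1 : 1 - x ≠ 0) (h5 : 5 * x - 1 ≠ 0) :
    HasDerivAt entropyProductLog (entropyProductLog' x) x := by
  have hA := (hasDerivAt_negMulLog h0).neg
  have hB := ((hasDerivAt_negMulLog h1).comp x ((hasDerivAt_id x).const_sub 1)).const_mul (3 / 2)
  have hC := ((hasDerivAt_negMulLog h5).comp x
    (((hasDerivAt_id x).const_mul 5).sub_const 1)).const_mul (1 / 2)
  have hD := ((hasDerivAt_id x).const_mul 6).mul_const (log 2)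
  refine (((hA.add hB).add hC).add hD).congr_deriv ?_
  simp only [entropyProductLog']
  ring

lemma hasDerivAt_entropyProductLog' {x : ℝ} (h0 : x ≠ 0) (h1 : 1 - x ≠ 0) (h5 : 5 * x - 1 ≠ 0) :
    HasDerivAt entropyProductLog' (x⁻¹ - 3 / 2 * (1 - x)⁻¹ - 25 / 2 * (5 * x - 1)⁻¹) x := by
  have hA := hasDerivAt_log h0
  have hB := ((hasDerivAt_log h1).comp x ((hasDerivAt_id x).const_sub 1)).const_mul (3 / 2)
  have hC := ((hasDerivAt_log h5).comp x
    (((hasDerivAt_id x).const_mul 5).sub_const 1)).const_mul (5 / 2)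
  refine (((hA.add hB).sub hC).add_const (6 * log 2)).congr_deriv ?_
  ring

lemma concaveOn_entropyProductLog : ConcaveOn ℝ (Icc (1 / 5) 1) entropyProductLog := by
  refine concaveOn_of_hasDerivWithinAt2_nonpos (f' := entropyProductLog')
    (f'' := fun x ↦ x⁻¹ - 3 / 2 * (1 - x)⁻¹ - 25 / 2 * (5 * x - 1)⁻¹) (convex_Icc _ _)
    (by unfold entropyProductLog; fun_prop) ?_ ?_ ?_
  all_goals simp only [interior_Icc, mem_Ioo]
  · rintro x ⟨hx5, hx1⟩
    exact (hasDerivAt_entropyProductLog (by linarith) (by linarith) (by linarith)).hasDerivWithinAt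
  · rintro x ⟨hx5, hx1⟩
    exact (hasDerivAt_entropyProductLog' (by linarith) (by linarith) (by linarith)).hasDerivWithinAt
  · rintro x ⟨hx5, hx1⟩
    have hinv : x⁻¹ ≤ 25 / 2 * (5 * x - 1)⁻¹ := by
      rw [← one_div, ← div_eq_mul_inv, div_le_div_iff₀ (by linarith) (by linarith)]
      linarith
    have hinv1 : 0 ≤ 3 / 2 * (1 - x)⁻¹ := by
      have : 0 < 1 - x := by linarith
      positivity
    linarith

lemma entropyProductLog_add_deriv_mul_one_sub (x : ℝ) :
    entropyProductLog x + entropyProductLog' x * (1 - x) =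
      log x - 2 * log (5 * x - 1) + 6 * log 2 := by
  simp only [entropyProductLog, entropyProductLog', negMulLog]
  ring

lemma entropyProductLog'_nonneg {x : ℝ} (h0 : 1 / 5 < x) (h1 : x < 1)
    (hroot : (5 * x - 1) ^ 5 ≤ 2 ^ 12 * x ^ 2 * (1 - x) ^ 3) : 0 ≤ entropyProductLog' x := by
  have hx : 0 < x := by linarith
  have hx1 : 0 < 1 - x := by linarith
  have hx5 : 0 < 5 * x - 1 := by linarith
  have hlog := log_le_log (by positivity) hroot
  rw [log_pow, log_mul (by positivity) (by positivity), log_mul (by positivity) (by positivity),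
    log_pow, log_pow, log_pow] at hlog
  push_cast at hlog
  simp only [entropyProductLog']
  linarith

lemma entropyProductLog_le_log {x₀ c : ℝ} (h0 : 1 / 5 < x₀) (h1 : x₀ < 1)
    (hroot : (5 * x₀ - 1) ^ 5 ≤ 2 ^ 12 * x₀ ^ 2 * (1 - x₀) ^ 3)
    (hc : 2 ^ 6 * x₀ / (5 * x₀ - 1) ^ 2 ≤ c) {β : ℝ} (hβ : β ∈ Icc (1 / 5) 1) :
    entropyProductLog β ≤ log c := by
  have hx₀ : 0 < x₀ := by linarith
  have hx₀5 : 0 < 5 * x₀ - 1 := by linarith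
  have hslope := entropyProductLog'_nonneg h0 h1 hroot
  have hc' := log_le_log (by positivity) hc
  rw [log_div (by positivity) (by positivity), log_mul (by positivity) (by positivity), log_pow,
    log_pow] at hc'
  push_cast at hc'
  calc entropyProductLog β
      ≤ entropyProductLog x₀ + entropyProductLog' x₀ * (β - x₀) :=
        concaveOn_entropyProductLog.le_add_mul_sub_of_hasDerivAt ⟨h0.le, h1.le⟩ hβ
          (hasDerivAt_entropyProductLog hx₀.ne' (by linarith) hx₀5.ne')
    _ ≤ entropyProductLog x₀ + entropyProductLog' x₀ * (1 - x₀) := by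
        gcongr
        exact hβ.2
    _ ≤ log c := by linarith [entropyProductLog_add_deriv_mul_one_sub x₀]

/-- For every real `β` with `1/2 ≤ β ≤ 1`,
`2^{h(β)} · 4^{β} · 2^{2β·h((1−β)/(4β))} ≤ 7.871`. -/
theorem entropy_bound_upper_range (β : ℝ) (h1 : 1 / 2 ≤ β) (h2 : β ≤ 1) :
    (2 : ℝ) ^ (binEnt β) * (4 : ℝ) ^ β *
      (2 : ℝ) ^ (2 * β * binEnt ((1 - β) / (4 * β))) ≤ 7.871 := by
  have hβ : 0 < β := by linarith
  have hexp : (2 : ℝ) ^ (binEnt β) * (4 : ℝ) ^ β *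
      (2 : ℝ) ^ (2 * β * binEnt ((1 - β) / (4 * β))) = exp (entropyProductLog β) := by
    rw [entropyProductLog_eq hβ.ne', rpow_def_of_pos two_pos, rpow_def_of_pos four_pos,
      rpow_def_of_pos two_pos, ← exp_add, ← exp_add, ← binEnt_mul_log_two, ← binEnt_mul_log_two,
      show (4 : ℝ) = 2 ^ 2 by norm_num, log_pow]
    push_cast
    ring_nf
  rw [hexp, ← le_log_iff_exp_le (by norm_num)]
  -- `143/215 ≈ 0.665116` lies just left of the maximiser `≈ 0.665141`; the bound obtained is `≈ 7.87072`.
  exact entropyProductLog_le_log (x₀ := 143 / 215) (by norm_num) (by norm_num) (by norm_num)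
    (by norm_num) ⟨by linarith, h2⟩
end
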